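/- arXiv:2406.05840 — 10 statements merged into one kernel-verified Lean document; each statement's English description precedes it below -/
import Mathlib

section
/- Let n, k, t be positive integers with k ≥ t and n ≥ 2k - t + 1, and let q ≥ 2 be an integer. Then for any positive integers i and j with i ≤ j ≤ k, one has [k-t+1 choose 1]_q^(j-i) · [n-j choose k-j]_q ≤ [n-i choose k-i]_q. -/
/-- The Gaussian binomial coefficient `[n choose k]_q`, via the product formula
`∏ i < k, (q^(n-i) - 1)/(q^(k-i) - 1)` (the division is exact for `q ≥ 2`, `k ≤ n`). -/
def gaussBinom (q n k : ℕ) : ℕ :=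
  (∏ i ∈ Finset.range k, (q ^ (n - i) - 1)) / (∏ i ∈ Finset.range k, (q ^ (k - i) - 1))

namespace GBaux

/-- numerator product -/
def P (q n k : ℕ) : ℕ := ∏ i ∈ Finset.range k, (q ^ (n - i) - 1)

lemma P_succ (q n k : ℕ) : P q (n+1) (k+1) = (q ^ (n+1) - 1) * P q n k := by
  unfold P
  rw [Finset.prod_range_succ', mul_comm]
  congr 1
  · simp

lemma P_last (q n k : ℕ) : P q n (k+1) = P q n k * (q ^ (n - k) - 1) :=
  Finset.prod_range_succ _ _

lemma P_diag_pos (q k : ℕ) (hq : 2 ≤ q) : 0 < P q k k := by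
  apply Finset.prod_pos
  intro i hi
  simp only [Finset.mem_range] at hi
  have h1 : 1 ≤ k - i := by omega
  have : q ≤ q ^ (k - i) := Nat.le_self_pow (by omega) q
  omega

lemma dvd_P (q : ℕ) (hq : 2 ≤ q) : ∀ n k, k ≤ n → P q k k ∣ P q n k := by
  intro n
  induction n with
  | zero => intro k hk; interval_cases k; simp [P]
  | succ n ih =>
    intro k hk
    match k with
    | 0 => simp [P]
    | K + 1 =>
      by_cases hKn : K = n
      · subst hKn; exact dvd_refl _
      · have hK : K + 1 ≤ n := by omega
        have ha1 : 1 ≤ q ^ (n - K) := Nat.one_le_pow _ _ (by omega)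
        have hb1 : 1 ≤ q ^ (K + 1) := Nat.one_le_pow _ _ (by omega)
        have key : q ^ (n + 1) - 1
            = q ^ (n - K) * (q ^ (K + 1) - 1) + (q ^ (n - K) - 1) := by
          have hab : q ^ (n - K) * q ^ (K + 1) = q ^ (n + 1) := by
            rw [← pow_add]; congr 1; omega
          have e1 : q ^ (n - K) * (q ^ (K + 1) - 1) + q ^ (n - K) = q ^ (n + 1) := by
            rw [← hab, ← Nat.mul_succ]; congr 1; omega
          omega
        rw [P_succ q n K, key, add_mul]
        apply dvd_add
        · rw [show P q (K+1) (K+1) = (q ^ (K+1) - 1) * P q K K from P_succ q K K]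
          have h1 : (q ^ (K+1) - 1) * P q K K ∣ (q ^ (K+1) - 1) * P q n K :=
            mul_dvd_mul_left _ (ih K (by omega))
          exact h1.trans (by rw [mul_assoc]; exact dvd_mul_left _ _)
        · rw [mul_comm, ← P_last]
          exact ih (K+1) hK

lemma gB_mul (q n k : ℕ) (hq : 2 ≤ q) (hk : k ≤ n) :
    gaussBinom q n k * P q k k = P q n k :=
  Nat.div_mul_cancel (dvd_P q hq n k hk)

lemma gB_rec (q N K : ℕ) (hq : 2 ≤ q) (hKN : K ≤ N) :
    gaussBinom q (N+1) (K+1) * (q ^ (K+1) - 1) = (q ^ (N+1) - 1) * gaussBinom q N K := by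
  apply Nat.eq_of_mul_eq_mul_right (P_diag_pos q K hq)
  calc gaussBinom q (N+1) (K+1) * (q ^ (K+1) - 1) * P q K K
      = gaussBinom q (N+1) (K+1) * P q (K+1) (K+1) := by
        rw [P_succ q K K, mul_assoc]
    _ = P q (N+1) (K+1) := gB_mul q (N+1) (K+1) hq (by omega)
    _ = (q ^ (N+1) - 1) * P q N K := P_succ q N K
    _ = (q ^ (N+1) - 1) * (gaussBinom q N K * P q K K) := by rw [gB_mul q N K hq hKN]
    _ = (q ^ (N+1) - 1) * gaussBinom q N K * P q K K := by ring

lemma gB_one (q M : ℕ) (hq : 2 ≤ q) :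
    gaussBinom q M 1 * (q - 1) = q ^ M - 1 := by
  have h : gaussBinom q M 1 = (q ^ M - 1) / (q - 1) := by
    simp [gaussBinom]
  rw [h, Nat.div_mul_cancel (by simpa using Nat.sub_dvd_pow_sub_pow q 1 M)]

lemma scalar (q a b s : ℕ) (hq : 2 ≤ q) (ha : 1 ≤ a) (hs : a + b ≤ s) :
    (q ^ a - 1) * (q ^ b - 1) ≤ (q ^ s - 1) * (q - 1) := by
  have hA : q ≤ q ^ a := Nat.le_self_pow (by omega) q
  have hB : 1 ≤ q ^ b := Nat.one_le_pow _ _ (by omega)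
  have hS : q ^ a * q ^ b ≤ q ^ s := by
    rw [← pow_add]; exact Nat.pow_le_pow_right (by omega) hs
  have hS1 : 1 ≤ q ^ s := Nat.one_le_pow _ _ (by omega)
  zify [hA.trans', hB, hS1, hq, show (1:ℕ) ≤ q ^ a by omega, show (1:ℕ) ≤ q by omega]
  nlinarith [hS, hA, hB, hq]

lemma step (q N K M : ℕ) (hq : 2 ≤ q) (hKN : K ≤ N) (hM : 1 ≤ M)
    (hs : M + (K + 1) ≤ N + 1) :
    gaussBinom q M 1 * gaussBinom q N K ≤ gaussBinom q (N+1) (K+1) := by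
  have hb1 : q ≤ q ^ (K + 1) := Nat.le_self_pow (by omega) q
  have hpos : 0 < (q - 1) * (q ^ (K+1) - 1) := by
    have : 2 ≤ q ^ (K+1) := by omega
    exact Nat.mul_pos (by omega) (by omega)
  apply Nat.le_of_mul_le_mul_right _ hpos
  calc gaussBinom q M 1 * gaussBinom q N K * ((q - 1) * (q ^ (K+1) - 1))
      = (gaussBinom q M 1 * (q - 1)) * (q ^ (K+1) - 1) * gaussBinom q N K := by ring
    _ = (q ^ M - 1) * (q ^ (K+1) - 1) * gaussBinom q N K := by rw [gB_one q M hq]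
    _ ≤ (q ^ (N+1) - 1) * (q - 1) * gaussBinom q N K :=
        Nat.mul_le_mul_right _ (scalar q M (K+1) (N+1) hq hM hs)
    _ = (gaussBinom q (N+1) (K+1) * (q ^ (K+1) - 1)) * (q - 1) := by
        rw [gB_rec q N K hq hKN]; ring
    _ = gaussBinom q (N+1) (K+1) * ((q - 1) * (q ^ (K+1) - 1)) := by ring

lemma main_aux (q n k t : ℕ) (hq : 2 ≤ q) (htk : t ≤ k) (ht : 0 < t)
    (hnk : 2 * k - t + 1 ≤ n) :
    ∀ d i j, i + d = j → j ≤ k →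
      gaussBinom q (k - t + 1) 1 ^ d * gaussBinom q (n - j) (k - j) ≤
        gaussBinom q (n - i) (k - i) := by
  intro d
  induction d with
  | zero =>
    intro i j hij hjk
    have : i = j := by omega
    subst this
    simp
  | succ d ih =>
    intro i j hij hjk
    have h1 : i + 1 ≤ j := by omega
    have hik : i + 1 ≤ k := by omega
    have hin : i + 1 ≤ n := by omega
    have hstep : gaussBinom q (k - t + 1) 1 * gaussBinom q (n - (i+1)) (k - (i+1)) ≤
        gaussBinom q (n - i) (k - i) := by
      have hN : n - (i+1) + 1 = n - i := by omega
      have hK : k - (i+1) + 1 = k - i := by omega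
      have := step q (n - (i+1)) (k - (i+1)) (k - t + 1) hq (by omega) (by omega) (by omega)
      rwa [hN, hK] at this
    calc gaussBinom q (k - t + 1) 1 ^ (d+1) * gaussBinom q (n - j) (k - j)
        = gaussBinom q (k - t + 1) 1 *
          (gaussBinom q (k - t + 1) 1 ^ d * gaussBinom q (n - j) (k - j)) := by ring
      _ ≤ gaussBinom q (k - t + 1) 1 * gaussBinom q (n - (i+1)) (k - (i+1)) :=
          Nat.mul_le_mul_left _ (ih (i+1) j (by omega) hjk)
      _ ≤ gaussBinom q (n - i) (k - i) := hstep

end GBaux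

theorem stmt_3 (q n k t i j : ℕ) (hq : 2 ≤ q) (hn : 0 < n) (hk : 0 < k) (ht : 0 < t)
    (htk : t ≤ k) (hnk : 2 * k - t + 1 ≤ n) (hi : 0 < i) (hj : 0 < j) (hij : i ≤ j)
    (hjk : j ≤ k) :
    gaussBinom q (k - t + 1) 1 ^ (j - i) * gaussBinom q (n - j) (k - j) ≤
      gaussBinom q (n - i) (k - i) := by
  exact GBaux.main_aux q n k t hq htk ht hnk (j - i) i j (by omega) hjk
end

section
/- For non-negative integers n, k with k ≤ n and any integer q ≥ 2, the Gaussian binomial coefficient satisfies [n choose k]_q ≤ (7/2) q^(k(n-k)); moreover if q ≥ 3 then [n choose k]_q ≤ 2 q^(k(n-k)). -/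
open Finset

section Weierstrass

variable {R : Type*} [CommRing R] [LinearOrder R] [IsStrictOrderedRing R]

theorem one_sub_sum_le_prod_one_sub {ι : Type*} (s : Finset ι) (f : ι → R)
    (h0 : ∀ i ∈ s, 0 ≤ f i) (h1 : ∀ i ∈ s, f i ≤ 1) :
    1 - ∑ i ∈ s, f i ≤ ∏ i ∈ s, (1 - f i) := by
  induction s using Finset.cons_induction with
  | empty => simp
  | cons a s _ ih =>
    rw [prod_cons, sum_cons]
    have hfa := h0 a (mem_cons_self a s)
    have hsum : 0 ≤ ∑ i ∈ s, f i := sum_nonneg fun i hi ↦ h0 i (mem_cons_of_mem hi)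
    have hprod :=
      ih (fun i hi ↦ h0 i (mem_cons_of_mem hi)) (fun i hi ↦ h1 i (mem_cons_of_mem hi))
    nlinarith [h1 a (mem_cons_self a s)]

end Weierstrass

variable {K : Type*} [Field K] [LinearOrder K] [IsStrictOrderedRing K]

theorem one_sub_pow_div_le_prod_Ico {x : K} (hx0 : 0 ≤ x) (hx1 : x < 1) (m n : ℕ) :
    1 - x ^ m / (1 - x) ≤ ∏ i ∈ Ico m n, (1 - x ^ i) :=
  calc 1 - x ^ m / (1 - x) ≤ 1 - ∑ i ∈ Ico m n, x ^ i := by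
        gcongr; exact geom_sum_Ico_le_of_lt_one hx0 hx1
    _ ≤ _ := one_sub_sum_le_prod_one_sub _ _ (fun i _ ↦ pow_nonneg hx0 i)
        (fun i _ ↦ pow_le_one₀ hx0 hx1.le)

theorem half_le_prod_one_sub_inv_pow {Q : K} (hQ : 3 ≤ Q) (N : ℕ) :
    1 / 2 ≤ ∏ j ∈ Ico 1 N, (1 - Q⁻¹ ^ j) := by
  have hx0 : 0 ≤ Q⁻¹ := by positivity
  have hx : Q⁻¹ ≤ 3⁻¹ := inv_anti₀ (by norm_num) hQ
  refine le_trans ?_ (one_sub_pow_div_le_prod_Ico hx0 (by linarith) 1 N)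
  rw [pow_one, le_sub_comm, div_le_iff₀ (by linarith)]
  linarith

theorem two_sevenths_le_prod_one_sub_half_pow (N : ℕ) :
    (2 / 7 : K) ≤ ∏ j ∈ Ico 1 N, (1 - 2⁻¹ ^ j) := by
  set f : ℕ → K := fun j ↦ 1 - 2⁻¹ ^ j
  have hf0 : ∀ j, 0 ≤ f j := fun j ↦ sub_nonneg.2 (pow_le_one₀ (by norm_num) (by norm_num))
  have hf1 : ∀ j, f j ≤ 1 := fun j ↦ sub_le_self _ (by positivity)
  have head : ∏ j ∈ Ico 1 4, f j = 21 / 64 := by norm_num [f, prod_Ico_succ_top]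
  have tail : 7 / 8 ≤ ∏ j ∈ Ico 4 (max N 4), f j :=
    le_trans (by norm_num)
      (one_sub_pow_div_le_prod_Ico (x := (2⁻¹ : K)) (by norm_num) (by norm_num) 4 _)
  calc (2 / 7 : K) ≤ 21 / 64 * (7 / 8) := by norm_num
    _ ≤ (∏ j ∈ Ico 1 4, f j) * ∏ j ∈ Ico 4 (max N 4), f j := by rw [head]; gcongr
    _ = ∏ j ∈ Ico 1 (max N 4), f j := prod_Ico_consecutive f (by norm_num) (le_max_right N 4)
    _ ≤ ∏ j ∈ Ico 1 N, f j :=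
        prod_le_prod_of_subset_of_le_one (Ico_subset_Ico_right (le_max_left N 4))
          (fun j _ ↦ hf0 j) (fun j _ _ ↦ hf1 j)

theorem pow_sub_one_div_pow_sub_one_le {Q : K} (hQ : 1 < Q) {a b : ℕ} (hb : b ≠ 0)
    (hba : b ≤ a) : (Q ^ a - 1) / (Q ^ b - 1) ≤ Q ^ (a - b) / (1 - Q⁻¹ ^ b) := by
  have hQb : 1 < Q ^ b := one_lt_pow₀ hQ hb
  have hrhs : Q ^ (a - b) / (1 - Q⁻¹ ^ b) = Q ^ a / (Q ^ b - 1) := by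
    rw [← pow_sub_mul_pow Q hba, inv_pow]
    field_simp
  rw [hrhs]
  gcongr
  linarith

theorem gaussBinom_le_prod_div {q : ℕ} (hq : 0 < q) (n k : ℕ) :
    (gaussBinom q n k : K) ≤
      ∏ i ∈ range k, (((q : K) ^ (n - i) - 1) / ((q : K) ^ (k - i) - 1)) := by
  have hcast : ∀ m, ((q ^ m - 1 : ℕ) : K) = (q : K) ^ m - 1 := fun m ↦ by
    rw [Nat.cast_sub (Nat.one_le_pow _ _ hq)]; push_cast; rfl
  simp_rw [prod_div_distrib, ← hcast, ← Nat.cast_prod]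
  exact Nat.cast_div_le

theorem gaussBinom_le_div_prod {q n k : ℕ} (hq : 1 < q) (hkn : k ≤ n) :
    (gaussBinom q n k : K) ≤
      (q : K) ^ (k * (n - k)) / ∏ j ∈ Ico 1 (k + 1), (1 - (q : K)⁻¹ ^ j) := by
  have hQ : (1 : K) < q := by exact_mod_cast hq
  have hreflect : ∏ i ∈ range k, (1 - (q : K)⁻¹ ^ (k - i)) =
      ∏ j ∈ Ico 1 (k + 1), (1 - (q : K)⁻¹ ^ j) := by
    have := prod_Ico_reflect (fun j ↦ 1 - (q : K)⁻¹ ^ j) 0 k.le_succ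
    rwa [Nat.sub_zero, Nat.add_sub_cancel_left, ← range_eq_Ico] at this
  calc (gaussBinom q n k : K)
      ≤ ∏ i ∈ range k, (((q : K) ^ (n - i) - 1) / ((q : K) ^ (k - i) - 1)) :=
        gaussBinom_le_prod_div (by omega) n k
    _ ≤ ∏ i ∈ range k, ((q : K) ^ (n - k) / (1 - (q : K)⁻¹ ^ (k - i))) := by
        refine prod_le_prod (fun i _ ↦ ?_) (fun i hi ↦ ?_)
        · exact div_nonneg (sub_nonneg.2 (one_le_pow₀ hQ.le))
            (sub_nonneg.2 (one_le_pow₀ hQ.le))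
        · have := mem_range.1 hi
          simpa [show n - i - (k - i) = n - k by omega] using
            pow_sub_one_div_pow_sub_one_le hQ (a := n - i) (b := k - i) (by omega) (by omega)
    _ = (q : K) ^ (k * (n - k)) / ∏ j ∈ Ico 1 (k + 1), (1 - (q : K)⁻¹ ^ j) := by
        rw [prod_div_distrib, prod_const, card_range, ← pow_mul, mul_comm, hreflect]

theorem stmt_4 (q n k : ℕ) (hq : 2 ≤ q) (hkn : k ≤ n) :
    (gaussBinom q n k : ℚ) ≤ 7 / 2 * (q : ℚ) ^ (k * (n - k)) ∧
      (3 ≤ q → (gaussBinom q n k : ℚ) ≤ 2 * (q : ℚ) ^ (k * (n - k))) := by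
  set P := ∏ j ∈ Ico 1 (k + 1), (1 - (q : ℚ)⁻¹ ^ j)
  have hbound : (gaussBinom q n k : ℚ) ≤ (q : ℚ) ^ (k * (n - k)) / P :=
    gaussBinom_le_div_prod hq hkn
  have hP3 : 3 ≤ q → 1 / 2 ≤ P :=
    fun h3 ↦ half_le_prod_one_sub_inv_pow (by exact_mod_cast h3) _
  have hP2 : 2 / 7 ≤ P := by
    rcases hq.eq_or_lt with rfl | h3
    · simpa [P] using two_sevenths_le_prod_one_sub_half_pow (K := ℚ) (k + 1)
    · linarith [hP3 h3]
  have hconclude : ∀ c : ℚ, 0 < c → c ≤ P →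
      (gaussBinom q n k : ℚ) ≤ c⁻¹ * (q : ℚ) ^ (k * (n - k)) :=
    fun c hc hcP ↦ hbound.trans (by rw [← div_eq_inv_mul]; gcongr)
  exact ⟨by simpa using hconclude (2 / 7) (by norm_num) hP2,
    fun h3 ↦ by simpa using hconclude (1 / 2) (by norm_num) (hP3 h3)⟩
end

section
/- Let V be a vector space and U₁, U₂, U₃, U₄ subspaces of V. If for each j ∈ {3,4} we have U₁ ∩ U₂ ⊆ U_j and U_j = (U_j ∩ U₁) + (U_j ∩ U₂), then U₃ ∩ U₄ = (U₃ ∩ U₄ ∩ U₁) + (U₃ ∩ U₄ ∩ U₂). -/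
theorem stmt_6 {K V : Type*} [Field K] [AddCommGroup V] [Module K V]
    (U₁ U₂ U₃ U₄ : Submodule K V)
    (h₃ : U₁ ⊓ U₂ ≤ U₃) (h₃' : U₃ = U₃ ⊓ U₁ ⊔ U₃ ⊓ U₂)
    (h₄ : U₁ ⊓ U₂ ≤ U₄) (h₄' : U₄ = U₄ ⊓ U₁ ⊔ U₄ ⊓ U₂) :
    U₃ ⊓ U₄ = U₃ ⊓ U₄ ⊓ U₁ ⊔ U₃ ⊓ U₄ ⊓ U₂ := by
  apply le_antisymm
  · intro x hx
    obtain ⟨hx3, hx4⟩ := hx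
    have hx3' : x ∈ U₃ ⊓ U₁ ⊔ U₃ ⊓ U₂ := h₃' ▸ hx3
    have hx4' : x ∈ U₄ ⊓ U₁ ⊔ U₄ ⊓ U₂ := h₄' ▸ hx4
    obtain ⟨a₁, ha₁, a₂, ha₂, hab⟩ := Submodule.mem_sup.mp hx3'
    obtain ⟨b₁, hb₁, b₂, hb₂, hbc⟩ := Submodule.mem_sup.mp hx4'
    have hd : a₁ - b₁ ∈ U₁ ⊓ U₂ := by
      have h1 : a₁ - b₁ ∈ U₁ := sub_mem ha₁.2 hb₁.2
      have heq : a₁ - b₁ = b₂ - a₂ := by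
        have := hab.trans hbc.symm
        linear_combination (norm := abel) this
      have h2 : a₁ - b₁ ∈ U₂ := heq ▸ sub_mem hb₂.2 ha₂.2
      exact ⟨h1, h2⟩
    have ha₁4 : a₁ ∈ U₄ := by
      have : a₁ = b₁ + (a₁ - b₁) := by abel
      rw [this]; exact add_mem hb₁.1 (h₄ hd)
    have ha₂4 : a₂ ∈ U₄ := by
      have heq : a₁ - b₁ = b₂ - a₂ := by
        have := hab.trans hbc.symm
        linear_combination (norm := abel) this
      have : a₂ = b₂ - (a₁ - b₁) := by rw [heq]; abel
      rw [this]; exact sub_mem hb₂.1 (h₄ hd)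
    exact Submodule.mem_sup.mpr ⟨a₁, ⟨⟨ha₁.1, ha₁4⟩, ha₁.2⟩, a₂, ⟨⟨ha₂.1, ha₂4⟩, ha₂.2⟩, hab⟩
  · exact sup_le inf_le_left inf_le_left
end

section
/- Let n, k, t be positive integers with k ≥ t + 1 and n ≥ 2k - t + 1, let V be an n-dimensional vector space over F_q, let U₁, U₂ be k-dimensional subspaces, and let E be a t-dimensional subspace of U₁ with U₁ ∩ U₂ ⊆ E and dim(U₁ ∩ U₂) = t - 1. Then the family H(U₁,U₂,E) = {F : F is a k-subspace of V, E ⊆ F, dim(F ∩ U₂) ≥ t} ∪ {U₁, U₂} has size [n-t choose k-t]_q - q^((k-t+1)(k-t)) [n-k-1 choose k-t]_q + 2. -/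
/-!
Every member `F` of the first family contains `E`, so `F ↦ F/E` identifies it with a
`(k-t)`-subspace `X` of `V/E`. As `E ∩ U₂ = U₁ ∩ U₂` has dimension `t - 1`, we get
`dim (F ∩ U₂) = dim (X ∩ Ū₂) + t - 1` with `Ū₂ = (U₂ + E)/E` of dimension `k - t + 1`, so the
condition `dim (F ∩ U₂) ≥ t` says that `X` meets `Ū₂` nontrivially. In an `m`-space there are
`q^(dj) [m-d choose j]_q` subspaces of dimension `j` meeting a `d`-space `D` trivially: the
`j`-tuples independent modulo `D` number `q^(dj) ∏ (q^(m-d) - q^i)`, and each such subspace is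
spanned by `∏ (q^j - q^i)` of them. Subtracting these from all `(k-t)`-subspaces of `V/E` counts
the family; `U₁` and `U₂` are two further, distinct subspaces outside it.
-/

open Module

open Submodule Set

theorem Nat.card_subtype_comp_eq_mul {α β : Type*} [Finite α] [Finite β] (f : α → β)
    (P : β → Prop) {c : ℕ} (hf : ∀ b, P b → Nat.card {a // f a = b} = c) :
    Nat.card {a // P (f a)} = Nat.card {b // P b} * c := by
  have := Fintype.ofFinite {b // P b}
  let g : {a // P (f a)} → {b // P b} := fun a => ⟨f a, a.2⟩
  have hg : ∀ b : {b // P b}, Nat.card {a // g a = b} = c := fun b => by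
    rw [← hf b b.2]
    refine Nat.card_congr
      { toFun := fun a => ⟨a.1, congrArg Subtype.val a.2⟩
        invFun := fun a => ⟨⟨a.1, by rw [a.2]; exact b.2⟩, Subtype.ext a.2⟩
        left_inv := fun _ => rfl
        right_inv := fun _ => rfl }
  rw [Nat.card_congr (Equiv.sigmaFiberEquiv g).symm, Nat.card_sigma, Finset.sum_congr rfl
    fun b _ => hg b, Finset.sum_const, Finset.card_univ, smul_eq_mul, Nat.card_eq_fintype_card]

section Quotient

variable {R M : Type*} [Ring R] [AddCommGroup M] [Module R M]

theorem Submodule.card_mkQ_fiber (p : Submodule R M) (x : M ⧸ p) :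
    Nat.card {v // p.mkQ v = x} = Nat.card p := by
  obtain ⟨v₀, rfl⟩ := p.mkQ_surjective x
  refine Nat.card_congr
    { toFun := fun v => ⟨v - v₀, (Submodule.Quotient.eq p).1 v.2⟩
      invFun := fun d => ⟨d + v₀, (Submodule.Quotient.eq p).2 (by simp)⟩
      left_inv := fun v => Subtype.ext (by simp)
      right_inv := fun d => Subtype.ext (by simp) }

theorem Submodule.linearIndependent_mkQ_comp_iff {ι : Type*} (p : Submodule R M) {v : ι → M} :
    LinearIndependent R (p.mkQ ∘ v) ↔ LinearIndependent R v ∧ Disjoint (span R (range v)) p := by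
  refine ⟨fun h => ⟨h.of_comp, p.ker_mkQ ▸ Submodule.range_ker_disjoint h⟩, fun ⟨hv, hp⟩ => ?_⟩
  exact hv.map (p.ker_mkQ.symm ▸ hp)

end Quotient

theorem prod_pow_sub_pow_eq (q m j : ℕ) (hj : j ≤ m) :
    ∏ i : Fin j, (q ^ m - q ^ (i : ℕ)) =
      q ^ (∑ i : Fin j, (i : ℕ)) * ∏ i : Fin j, (q ^ (m - i) - 1) := by
  rw [← Finset.prod_pow_eq_pow_sum, ← Finset.prod_mul_distrib]
  refine Finset.prod_congr rfl fun i _ => ?_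
  rw [Nat.mul_sub, mul_one, ← pow_add, Nat.add_sub_cancel' (by omega)]

section FiniteField

variable {K V : Type*} [DivisionRing K] [Fintype K] [AddCommGroup V] [Module K V] [Finite V]

local notation "q" => Fintype.card K

theorem card_mkQ_comp_eq (D : Submodule K V) {j : ℕ} (g : Fin j → V ⧸ D) :
    Nat.card {f : Fin j → V // D.mkQ ∘ f = g} = q ^ (finrank K D * j) := by
  have hfib : {f : Fin j → V // D.mkQ ∘ f = g} ≃ {f : Fin j → V // ∀ i, D.mkQ (f i) = g i} :=
    Equiv.subtypeEquivRight fun f => funext_iff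
  rw [Nat.card_congr (hfib.trans (Equiv.subtypePiEquivPi (p := fun i v => D.mkQ v = g i))),
    Nat.card_pi]
  simp only [D.card_mkQ_fiber, Finset.prod_const, Finset.card_univ, Fintype.card_fin,
    natCard_eq_pow_finrank (K := K) (V := D), Nat.card_eq_fintype_card, ← pow_mul]

theorem card_linearIndependent_mkQ_comp (D : Submodule K V) {j : ℕ}
    (hj : j + finrank K D ≤ finrank K V) :
    Nat.card {f : Fin j → V // LinearIndependent K (D.mkQ ∘ f)} =
      q ^ (finrank K D * j) * ∏ i : Fin j, (q ^ (finrank K V - finrank K D) - q ^ (i : ℕ)) := by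
  have : Finite (V ⧸ D) := Module.finite_of_finite K
  refine (Nat.card_subtype_comp_eq_mul (fun f : Fin j → V => D.mkQ ∘ f)
    (fun g => LinearIndependent K g) (fun g _ => card_mkQ_comp_eq D g)).trans ?_
  rw [card_linearIndependent (by rw [D.finrank_quotient]; omega), D.finrank_quotient, mul_comm]

theorem card_span_range_eq (X : Submodule K V) {j : ℕ} (hX : finrank K X = j) :
    Nat.card {f : Fin j → V // span K (range f) = X} = ∏ i : Fin j, (q ^ j - q ^ (i : ℕ)) := by
  have hcard := card_linearIndependent (K := K) (V := X) hX.ge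
  rw [hX] at hcard
  rw [← hcard]
  refine Nat.card_congr
    { toFun := fun f => ⟨fun i => ⟨f.1 i, f.2.le (subset_span (mem_range_self i))⟩, ?_⟩
      invFun := fun g => ⟨X.subtype ∘ g.1, ?_⟩
      left_inv := fun _ => rfl
      right_inv := fun _ => rfl }
  · refine LinearIndependent.of_comp X.subtype ?_
    rw [linearIndependent_iff_card_eq_finrank_span]
    simp only [Set.finrank, Function.comp_def, subtype_apply, Fintype.card_fin]
    exact hX.symm.trans (congrArg (fun Y : Submodule K V => finrank K Y) f.2.symm)
  · rw [range_comp, ← map_span, g.2.span_eq_top_of_card_eq_finrank' (by simp [hX]),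
      Submodule.map_top, range_subtype]

theorem card_disjoint_mul (D : Submodule K V) {j : ℕ} (hj : j + finrank K D ≤ finrank K V) :
    Nat.card {X : Submodule K V // finrank K X = j ∧ Disjoint X D} *
        ∏ i : Fin j, (q ^ j - q ^ (i : ℕ)) =
      q ^ (finrank K D * j) * ∏ i : Fin j, (q ^ (finrank K V - finrank K D) - q ^ (i : ℕ)) := by
  rw [← card_linearIndependent_mkQ_comp D hj, ← Nat.card_subtype_comp_eq_mul
    (fun f : Fin j → V => span K (range f)) _ fun X hX => card_span_range_eq X hX.1]
  refine Nat.card_congr (Equiv.subtypeEquivRight fun f => ?_)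
  rw [D.linearIndependent_mkQ_comp_iff, linearIndependent_iff_card_eq_finrank_span,
    Fintype.card_fin, Set.finrank, eq_comm]

variable (K) in
theorem prod_pow_sub_pow_pos {m j : ℕ} (hj : j ≤ m) :
    0 < ∏ i : Fin j, (q ^ m - q ^ (i : ℕ)) :=
  Finset.prod_pos fun i _ =>
    Nat.sub_pos_of_lt (Nat.pow_lt_pow_right Fintype.one_lt_card (by omega))

variable (K) in
/-- The division in `gaussBinom` is exact: counting `j`-subspaces of `K^m` shows the quotient is
the number of them. -/
theorem gaussBinom_mul_prod {m j : ℕ} (hj : j ≤ m) :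
    gaussBinom q m j * ∏ i : Fin j, (q ^ j - q ^ (i : ℕ)) = ∏ i : Fin j, (q ^ m - q ^ (i : ℕ)) := by
  set N := Nat.card {X : Submodule K (Fin m → K) // finrank K X = j ∧ Disjoint X ⊥}
  have hN : N * ∏ i : Fin j, (q ^ j - q ^ (i : ℕ)) = ∏ i : Fin j, (q ^ m - q ^ (i : ℕ)) := by
    simpa only [finrank_bot, zero_mul, pow_zero, one_mul, Nat.sub_zero, finrank_fin_fun]
      using card_disjoint_mul (⊥ : Submodule K (Fin m → K)) (j := j) (by simpa using hj)
  suffices gaussBinom q m j = N by rw [this, hN]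
  rw [prod_pow_sub_pow_eq _ _ _ hj, prod_pow_sub_pow_eq _ _ _ le_rfl, mul_left_comm,
    Nat.mul_right_inj (pow_pos Fintype.card_pos _).ne'] at hN
  rw [gaussBinom, ← Fin.prod_univ_eq_prod_range (fun i => q ^ (m - i) - 1),
    ← Fin.prod_univ_eq_prod_range (fun i => q ^ (j - i) - 1), ← hN, Nat.mul_div_cancel]
  refine Finset.prod_pos fun i _ => Nat.sub_pos_of_lt (Nat.one_lt_pow ?_ Fintype.one_lt_card)
  have := i.2; omega

theorem ncard_finrank_eq_disjoint (D : Submodule K V) {j : ℕ}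
    (hj : j + finrank K D ≤ finrank K V) :
    {X : Submodule K V | finrank K X = j ∧ Disjoint X D}.ncard =
      q ^ (finrank K D * j) * gaussBinom q (finrank K V - finrank K D) j := by
  rw [← Nat.card_coe_set_eq]
  refine Nat.eq_of_mul_eq_mul_right (prod_pow_sub_pow_pos K (m := j) (j := j) le_rfl) ?_
  refine (card_disjoint_mul D hj).trans ?_
  rw [mul_assoc, gaussBinom_mul_prod K (by omega)]

theorem ncard_finrank_eq {j : ℕ} (hj : j ≤ finrank K V) :
    {X : Submodule K V | finrank K X = j}.ncard = gaussBinom q (finrank K V) j := by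
  simpa using ncard_finrank_eq_disjoint (⊥ : Submodule K V) (j := j) (by simpa using hj)

theorem ncard_finrank_eq_diff_disjoint_add (D : Submodule K V) {j : ℕ}
    (hj : j + finrank K D ≤ finrank K V) :
    ({X : Submodule K V | finrank K X = j} \ {X | Disjoint X D}).ncard +
        q ^ (finrank K D * j) * gaussBinom q (finrank K V - finrank K D) j =
      gaussBinom q (finrank K V) j := by
  rw [← ncard_finrank_eq_disjoint D hj, ← ncard_finrank_eq (by omega), add_comm]
  exact Set.ncard_inter_add_ncard_sdiff_eq_ncard _ _

end FiniteField

section Correspondence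

variable {K V : Type*} [DivisionRing K] [AddCommGroup V] [Module K V] [FiniteDimensional K V]

theorem Submodule.finrank_map_add_finrank_inf_ker {W : Type*} [AddCommGroup W] [Module K W]
    (f : V →ₗ[K] W) (p : Submodule K V) :
    finrank K (p.map f) + finrank K ↥(p ⊓ LinearMap.ker f) = finrank K p := by
  have h := LinearMap.finrank_range_add_finrank_ker (f.domRestrict p)
  rwa [LinearMap.range_domRestrict, LinearMap.ker_domRestrict, ← finrank_map_subtype_eq,
    map_comap_subtype] at h

theorem Submodule.finrank_comap_mkQ_inf (p : Submodule K V) (X : Submodule K (V ⧸ p))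
    (U : Submodule K V) :
    finrank K ↥(comap p.mkQ X ⊓ U) = finrank K ↥(X ⊓ U.map p.mkQ) + finrank K ↥(p ⊓ U) := by
  have h := finrank_map_add_finrank_inf_ker p.mkQ (comap p.mkQ X ⊓ U)
  rw [inf_comm _ U, ← map_inf_eq_map_inf_comap, ker_mkQ, inf_right_comm,
    inf_eq_left.2 (inf_le_right.trans (p.le_comap_mkQ X))] at h
  rw [inf_comm _ U, inf_comm X, inf_comm p]
  exact h.symm

theorem setOf_le_finrank_inf_eq_image_comap_mkQ {E U : Submodule K V} {k t : ℕ} (ht : 0 < t)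
    (htk : t ≤ k) (hE : finrank K E = t) (hEU : finrank K ↥(E ⊓ U) = t - 1) :
    {F : Submodule K V | finrank K F = k ∧ E ≤ F ∧ t ≤ finrank K ↥(F ⊓ U)} =
      comap E.mkQ '' ({X | finrank K X = k - t} \ {X | Disjoint X (U.map E.mkQ)}) := by
  have hmem (X : Submodule K (V ⧸ E)) :
      (finrank K ↥(comap E.mkQ X) = k ∧ E ≤ comap E.mkQ X ∧ t ≤ finrank K ↥(comap E.mkQ X ⊓ U)) ↔
        finrank K X = k - t ∧ ¬Disjoint X (U.map E.mkQ) := by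
    have hX := E.finrank_comap_mkQ_inf X ⊤
    rw [inf_top_eq, Submodule.map_top, range_mkQ, inf_top_eq, inf_top_eq, hE] at hX
    rw [E.finrank_comap_mkQ_inf X U, hEU, hX, disjoint_iff, ← finrank_eq_zero]
    simp only [E.le_comap_mkQ X, true_and]
    omega
  ext F
  refine ⟨fun hF => ?_, ?_⟩
  · have hF' : comap E.mkQ (F.map E.mkQ) = F := by rw [comap_map_mkQ, sup_eq_right.2 hF.2.1]
    exact ⟨_, (hmem _).1 (hF'.symm ▸ hF), hF'⟩
  · rintro ⟨X, hX, rfl⟩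
    exact (hmem X).2 hX

end Correspondence

theorem stmt_8_general {K V : Type*} [Field K] [Fintype K] [AddCommGroup V] [Module K V]
    [FiniteDimensional K V] (q n k t : ℕ) (hq : Fintype.card K = q)
    (hn : finrank K V = n) (ht : 0 < t) (htk : t + 1 ≤ k)
    (hnk : 2 * k - t + 1 ≤ n)
    (U₁ U₂ E : Submodule K V) (hU₂ : finrank K ↥U₂ = k)
    (hE : finrank K ↥E = t) (hEU₁ : E ≤ U₁) (hUU : U₁ ⊓ U₂ ≤ E)
    (hUUdim : finrank K ↥(U₁ ⊓ U₂) = t - 1) :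
    (({F : Submodule K V | finrank K ↥F = k ∧ E ≤ F ∧ t ≤ finrank K ↥(F ⊓ U₂)} ∪
        {U₁, U₂}).ncard : ℤ) =
      (gaussBinom q (n - t) (k - t) : ℤ) -
        (q : ℤ) ^ ((k - t + 1) * (k - t)) * gaussBinom q (n - k - 1) (k - t) + 2 := by
  subst hq hn
  have : Finite V := Module.finite_of_finite K
  have : Finite (V ⧸ E) := Module.finite_of_finite K
  have hEU₂ : E ⊓ U₂ = U₁ ⊓ U₂ :=
    le_antisymm (inf_le_inf_right U₂ hEU₁) (le_inf hUU inf_le_right)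
  have hU₂E : finrank K ↥(U₂.map E.mkQ) = k - t + 1 := by
    have h := E.finrank_comap_mkQ_inf ⊤ U₂
    rw [comap_top, top_inf_eq, top_inf_eq, hEU₂, hUUdim, hU₂] at h
    omega
  have hcount := ncard_finrank_eq_diff_disjoint_add (U₂.map E.mkQ) (j := k - t)
    (by rw [hU₂E, E.finrank_quotient, hE]; omega)
  rw [hU₂E, E.finrank_quotient, hE, show finrank K V - t - (k - t + 1) = finrank K V - k - 1 by
    omega] at hcount
  set A := {F : Submodule K V | finrank K ↥F = k ∧ E ≤ F ∧ t ≤ finrank K ↥(F ⊓ U₂)} with hA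
  have hU₁A : U₁ ∉ A := fun h => by have := h.2.2; omega
  have hU₂A : U₂ ∉ A := fun h => by have := Submodule.finrank_mono (le_inf hEU₁ h.2.1); omega
  have hU₁₂ : U₁ ≠ U₂ := fun h => by rw [h, inf_idem] at hUUdim; omega
  rw [Set.ncard_union_eq (Set.disjoint_right.2 (by rintro F (rfl | rfl) <;> assumption)),
    Set.ncard_pair hU₁₂, hA, setOf_le_finrank_inf_eq_image_comap_mkQ ht (by omega) hE
      (hEU₂ ▸ hUUdim),
    Set.ncard_image_of_injective _ (comap_injective_of_surjective E.mkQ_surjective), ← hcount]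
  push_cast
  ring

theorem stmt_8 {K V : Type*} [Field K] [Fintype K] [AddCommGroup V] [Module K V]
    [FiniteDimensional K V] (q n k t : ℕ) (hq : Fintype.card K = q)
    (hn : finrank K V = n) (hk : 0 < k) (ht : 0 < t) (htk : t + 1 ≤ k)
    (hnk : 2 * k - t + 1 ≤ n)
    (U₁ U₂ E : Submodule K V) (hU₁ : finrank K ↥U₁ = k) (hU₂ : finrank K ↥U₂ = k)
    (hE : finrank K ↥E = t) (hEU₁ : E ≤ U₁) (hUU : U₁ ⊓ U₂ ≤ E)
    (hUUdim : finrank K ↥(U₁ ⊓ U₂) = t - 1) :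
    (({F : Submodule K V | finrank K ↥F = k ∧ E ≤ F ∧ t ≤ finrank K ↥(F ⊓ U₂)} ∪
        {U₁, U₂}).ncard : ℤ) =
      (gaussBinom q (n - t) (k - t) : ℤ) -
        (q : ℤ) ^ ((k - t + 1) * (k - t)) * gaussBinom q (n - k - 1) (k - t) + 2 :=
  stmt_8_general q n k t hq hn ht htk hnk U₁ U₂ E hU₂ hE hEU₁ hUU hUUdim
end

section
/- Let n, k, t be positive integers with k ≥ t + 2 and n ≥ 2k + 1 + δ, where δ = 1 if q = 2 and δ = 0 otherwise. Define f(n,k,t,x) = [x choose t]_q [k-t+1 choose 1]_q^(x-t) [n-x choose k-x]_q + [x choose t]_q · Σ_{i=0}^{x-t-1} [k-t+1 choose 1]_q^i. Then f(n,k,t,x) > f(n,k,t,x+1) for all x with t+1 ≤ x ≤ k-1. -/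
/-- The quantity `f(n,k,t,x)` from the paper. -/
def fAux (q n k t x : ℕ) : ℕ :=
  gaussBinom q x t * gaussBinom q (k - t + 1) 1 ^ (x - t) * gaussBinom q (n - x) (k - x) +
    gaussBinom q x t * ∑ i ∈ Finset.range (x - t), gaussBinom q (k - t + 1) 1 ^ i

def npAux (q n k : ℕ) : ℕ := ∏ i ∈ Finset.range k, (q ^ (n - i) - 1)

def gbAux (q : ℕ) : ℕ → ℕ → ℕ
  | _, 0 => 1
  | 0, _ + 1 => 0
  | n + 1, k + 1 => gbAux q n k + q ^ (k + 1) * gbAux q n (k + 1)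

lemma npAux_succ (q n k : ℕ) : npAux q n (k + 1) = npAux q n k * (q ^ (n - k) - 1) :=
  Finset.prod_range_succ _ _

lemma npAux_succ' (q n k : ℕ) : npAux q (n + 1) (k + 1) = npAux q n k * (q ^ (n + 1) - 1) := by
  unfold npAux
  rw [Finset.prod_range_succ']
  simp only [Nat.succ_sub_succ_eq_sub, Nat.sub_zero]

lemma npAux_zero (q : ℕ) {n k : ℕ} (h : n < k) : npAux q n k = 0 := by
  apply Finset.prod_eq_zero (Finset.mem_range.2 h)
  simp [Nat.sub_self]

lemma npAux_pos {q : ℕ} (hq : 2 ≤ q) {n k : ℕ} (h : k ≤ n) : 0 < npAux q n k := by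
  apply Finset.prod_pos
  intro i hi
  have hi' : i < k := Finset.mem_range.1 hi
  have h1 : 1 ≤ n - i := by omega
  have h2 : q ≤ q ^ (n - i) := by
    calc q = q ^ 1 := (pow_one q).symm
    _ ≤ q ^ (n - i) := Nat.pow_le_pow_right (by omega) h1
  omega

lemma gbAux_mul {q : ℕ} (hq : 2 ≤ q) : ∀ n k, gbAux q n k * npAux q k k = npAux q n k := by
  intro n
  induction n with
  | zero =>
    intro k
    match k with
    | 0 => simp [gbAux, npAux]
    | k + 1 => simp [gbAux, npAux_zero q (Nat.succ_pos k)]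
  | succ n ih =>
    intro k
    match k with
    | 0 => simp [gbAux, npAux]
    | k + 1 =>
      show (gbAux q n k + q ^ (k + 1) * gbAux q n (k + 1)) * npAux q (k + 1) (k + 1) =
        npAux q (n + 1) (k + 1)
      rw [add_mul, npAux_succ' q k k, npAux_succ' q n k]
      have e1 : gbAux q n k * (npAux q k k * (q ^ (k + 1) - 1)) =
          npAux q n k * (q ^ (k + 1) - 1) := by
        rw [← mul_assoc, ih k]
      have e2 : q ^ (k + 1) * gbAux q n (k + 1) * (npAux q k k * (q ^ (k + 1) - 1)) =
          q ^ (k + 1) * npAux q n (k + 1) := by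
        rw [← npAux_succ' q k k, mul_assoc, ih (k + 1)]
      rw [e1, e2, npAux_succ q n k]
      by_cases hnk : k ≤ n
      · have e3 : q ^ (k + 1) * q ^ (n - k) = q ^ (n + 1) := by
          rw [← pow_add]; congr 1; omega
        have h1 : 1 ≤ q ^ (k + 1) := Nat.one_le_pow _ _ (by omega)
        have h2 : q ^ (k + 1) ≤ q ^ (n + 1) := Nat.pow_le_pow_right (by omega) (by omega)
        have h3 : 1 ≤ q ^ (n - k) := Nat.one_le_pow _ _ (by omega)
        have e4 : q ^ (k + 1) * (q ^ (n - k) - 1) = q ^ (n + 1) - q ^ (k + 1) := by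
          rw [Nat.mul_sub, e3, mul_one]
        rw [mul_comm (npAux q n k) (q ^ (n - k) - 1), ← mul_assoc, e4]
        have e5 : (q ^ (k + 1) - 1) + (q ^ (n + 1) - q ^ (k + 1)) = q ^ (n + 1) - 1 := by omega
        calc npAux q n k * (q ^ (k + 1) - 1) + (q ^ (n + 1) - q ^ (k + 1)) * npAux q n k
            = npAux q n k * ((q ^ (k + 1) - 1) + (q ^ (n + 1) - q ^ (k + 1))) := by ring
          _ = npAux q n k * (q ^ (n + 1) - 1) := by rw [e5]
      · rw [npAux_zero q (show n < k by omega)]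
        ring

lemma gbAux_pos {q : ℕ} (hq : 2 ≤ q) {n k : ℕ} (h : k ≤ n) : 0 < gbAux q n k := by
  have h1 := gbAux_mul hq n k
  have h2 := npAux_pos hq h
  rw [← h1] at h2
  exact Nat.pos_of_mul_pos_left (by rwa [mul_comm] at h2)

lemma gaussBinom_eq_gbAux {q : ℕ} (hq : 2 ≤ q) (n k : ℕ) :
    gaussBinom q n k = gbAux q n k := by
  have h := gbAux_mul hq n k
  have hD : 0 < npAux q k k := npAux_pos hq le_rfl
  show npAux q n k / npAux q k k = _
  rw [← h, Nat.mul_div_cancel _ hD]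

/-- Column recurrence: `[x+1, t] (q^{x+1-t}-1) = [x, t] (q^{x+1}-1)`. -/
lemma gbAux_left {q : ℕ} (hq : 2 ≤ q) (x t : ℕ) :
    gbAux q (x + 1) t * (q ^ (x + 1 - t) - 1) = gbAux q x t * (q ^ (x + 1) - 1) := by
  have hD : 0 < npAux q t t := npAux_pos hq le_rfl
  apply Nat.eq_of_mul_eq_mul_right hD
  calc gbAux q (x + 1) t * (q ^ (x + 1 - t) - 1) * npAux q t t
      = gbAux q (x + 1) t * npAux q t t * (q ^ (x + 1 - t) - 1) := by ring
    _ = npAux q (x + 1) t * (q ^ (x + 1 - t) - 1) := by rw [gbAux_mul hq]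
    _ = npAux q (x + 1) (t + 1) := (npAux_succ q (x + 1) t).symm
    _ = npAux q x t * (q ^ (x + 1) - 1) := npAux_succ' q x t
    _ = gbAux q x t * npAux q t t * (q ^ (x + 1) - 1) := by rw [gbAux_mul hq]
    _ = gbAux q x t * (q ^ (x + 1) - 1) * npAux q t t := by ring

/-- Diagonal recurrence: `[a+1, b+1] (q^{b+1}-1) = [a, b] (q^{a+1}-1)`. -/
lemma gbAux_diag {q : ℕ} (hq : 2 ≤ q) (a b : ℕ) :
    gbAux q (a + 1) (b + 1) * (q ^ (b + 1) - 1) = gbAux q a b * (q ^ (a + 1) - 1) := by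
  have hD : 0 < npAux q b b := npAux_pos hq le_rfl
  apply Nat.eq_of_mul_eq_mul_right hD
  calc gbAux q (a + 1) (b + 1) * (q ^ (b + 1) - 1) * npAux q b b
      = gbAux q (a + 1) (b + 1) * (npAux q b b * (q ^ (b + 1) - 1)) := by ring
    _ = gbAux q (a + 1) (b + 1) * npAux q (b + 1) (b + 1) := by rw [npAux_succ' q b b]
    _ = npAux q (a + 1) (b + 1) := gbAux_mul hq _ _
    _ = npAux q a b * (q ^ (a + 1) - 1) := npAux_succ' q a b
    _ = gbAux q a b * npAux q b b * (q ^ (a + 1) - 1) := by rw [gbAux_mul hq]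
    _ = gbAux q a b * (q ^ (a + 1) - 1) * npAux q b b := by ring

/-- `[m, 1] (q-1) = q^m - 1`. -/
lemma gbAux_one {q : ℕ} (hq : 2 ≤ q) (m : ℕ) :
    gbAux q m 1 * (q - 1) = q ^ m - 1 := by
  have h := gbAux_mul hq m 1
  simpa [npAux, Finset.prod_range_one] using h

lemma gbAux_ge_pow {q : ℕ} (hq : 2 ≤ q) {a b : ℕ} (hb : 1 ≤ b) (hba : b ≤ a) :
    q ^ (a - b) ≤ gbAux q a b := by
  obtain ⟨b', rfl⟩ : ∃ b', b = b' + 1 := ⟨b - 1, by omega⟩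
  obtain ⟨a', rfl⟩ : ∃ a', a = a' + 1 := ⟨a - 1, by omega⟩
  have hdiag := gbAux_diag hq a' b'
  have hg : 1 ≤ gbAux q a' b' := gbAux_pos hq (by omega)
  have hpb : 0 < q ^ (b' + 1) - 1 := by
    have : 2 ≤ q ^ (b' + 1) := by
      calc 2 ≤ q := hq
      _ = q ^ 1 := (pow_one q).symm
      _ ≤ q ^ (b' + 1) := Nat.pow_le_pow_right (by omega) (by omega)
    omega
  apply Nat.le_of_mul_le_mul_right _ hpb
  rw [hdiag]
  have e : q ^ (a' + 1 - (b' + 1)) * q ^ (b' + 1) = q ^ (a' + 1) := by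
    rw [← pow_add]; congr 1; omega
  have h1 : 1 ≤ q ^ (a' + 1 - (b' + 1)) := Nat.one_le_pow _ _ (by omega)
  calc q ^ (a' + 1 - (b' + 1)) * (q ^ (b' + 1) - 1)
      = q ^ (a' + 1) - q ^ (a' + 1 - (b' + 1)) := by rw [Nat.mul_sub, e, mul_one]
    _ ≤ q ^ (a' + 1) - 1 := by omega
    _ ≤ gbAux q a' b' * (q ^ (a' + 1) - 1) := Nat.le_mul_of_pos_left _ hg

lemma geomSum_le_aux {M : ℕ} (hM : 2 ≤ M) (m : ℕ) :
    (∑ i ∈ Finset.range m, M ^ i) + 1 ≤ M ^ m := by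
  induction m with
  | zero => simp
  | succ m ih =>
    rw [Finset.sum_range_succ, pow_succ]
    have h1 : 1 ≤ M ^ m := Nat.one_le_pow _ _ (by omega)
    nlinarith

lemma subprod_aux {X Y : ℕ} (hX : 1 ≤ X) (hY : 1 ≤ Y) :
    (X - 1) * (Y - 1) + X ≤ X * Y := by
  obtain ⟨x, rfl⟩ : ∃ x, X = x + 1 := ⟨X - 1, by omega⟩
  obtain ⟨y, rfl⟩ : ∃ y, Y = y + 1 := ⟨Y - 1, by omega⟩
  simp only [Nat.add_sub_cancel]
  nlinarith

lemma star_aux {q t c b a : ℕ} (hq : 2 ≤ q) (ht : 1 ≤ t) (hc : 2 ≤ c) (hb : 1 ≤ b)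
    (ha : t + c + 2 * b + (if q = 2 then 1 else 0) ≤ a) :
    3 * ((q ^ (t + c) - 1) * ((q ^ (c + b) - 1) * (q ^ b - 1))) ≤
      2 * ((q ^ a - 1) * ((q ^ c - 1) * (q - 1))) := by
  set W := (q ^ (c + b) - 1) * (q ^ b - 1) with hW
  -- A : 3 q^c ≤ 4 (q^c - 1)
  have h4c : 4 ≤ q ^ c := by
    calc (4 : ℕ) = 2 ^ 2 := by norm_num
    _ ≤ q ^ 2 := Nat.pow_le_pow_left hq 2
    _ ≤ q ^ c := Nat.pow_le_pow_right (by omega) hc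
  have hA : 3 * q ^ c ≤ 4 * (q ^ c - 1) := by omega
  -- B : q^t W + q^(t+c+b) ≤ q^(t+c+2b)
  have hsp : W + q ^ (c + b) ≤ q ^ (c + b) * q ^ b :=
    subprod_aux (Nat.one_le_pow _ _ (by omega)) (Nat.one_le_pow _ _ (by omega))
  have hB : q ^ t * W + q ^ (t + c + b) ≤ q ^ (t + c + 2 * b) := by
    have := Nat.mul_le_mul_left (q ^ t) hsp
    calc q ^ t * W + q ^ (t + c + b)
        = q ^ t * W + q ^ t * q ^ (c + b) := by rw [← pow_add]; ring_nf
      _ = q ^ t * (W + q ^ (c + b)) := by ring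
      _ ≤ q ^ t * (q ^ (c + b) * q ^ b) := Nat.mul_le_mul_left _ hsp
      _ = q ^ (t + c + 2 * b) := by rw [← pow_add, ← pow_add]; congr 1; omega
  -- C : 2 q^(t+c+2b) ≤ (q^a-1)(q-1) + 2 q^(t+c+b)
  have hfb : 1 ≤ q ^ (t + c + b) := Nat.one_le_pow _ _ (by omega)
  have hC : 2 * q ^ (t + c + 2 * b) ≤ (q ^ a - 1) * (q - 1) + 2 * q ^ (t + c + b) := by
    by_cases hq2 : q = 2
    · subst hq2
      simp only [if_pos rfl] at ha
      have h1 : 2 ^ (t + c + 2 * b + 1) ≤ 2 ^ a := Nat.pow_le_pow_right (by omega) ha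
      have h2 : 2 * 2 ^ (t + c + 2 * b) = 2 ^ (t + c + 2 * b + 1) := by
        rw [pow_succ]; ring
      have h3 : 1 ≤ 2 ^ a := Nat.one_le_pow _ _ (by omega)
      simp only [show (2 : ℕ) - 1 = 1 by norm_num, mul_one]
      omega
    · have h3 : 3 ≤ q := by omega
      have ha' : t + c + 2 * b ≤ a := by simp [hq2] at ha; omega
      have hae : q ^ (t + c + 2 * b) ≤ q ^ a := Nat.pow_le_pow_right (by omega) ha'
      have h1 : 1 ≤ q ^ (t + c + 2 * b) := Nat.one_le_pow _ _ (by omega)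
      have key : 2 * (q ^ (t + c + 2 * b) - 1) ≤ (q ^ a - 1) * (q - 1) := by
        have e1 : q ^ (t + c + 2 * b) - 1 ≤ q ^ a - 1 := by omega
        calc 2 * (q ^ (t + c + 2 * b) - 1) = (q ^ (t + c + 2 * b) - 1) * 2 := by ring
          _ ≤ (q ^ a - 1) * (q - 1) := Nat.mul_le_mul e1 (by omega)
      have e2 : q ^ (t + c + 2 * b) - 1 + 1 = q ^ (t + c + 2 * b) := by omega
      linarith
  -- combine B and C : 2 q^t W ≤ (q^a-1)(q-1)
  have hD : 2 * (q ^ t * W) ≤ (q ^ a - 1) * (q - 1) := by linarith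
  have main : 2 * (3 * ((q ^ (t + c) - 1) * W)) ≤
      2 * (2 * ((q ^ a - 1) * ((q ^ c - 1) * (q - 1)))) := by
    calc 2 * (3 * ((q ^ (t + c) - 1) * W))
        = 6 * ((q ^ (t + c) - 1) * W) := by ring
      _ ≤ 6 * (q ^ (t + c) * W) := by
          apply Nat.mul_le_mul_left
          exact Nat.mul_le_mul_right _ (by omega)
      _ = (2 * (q ^ t * W)) * (3 * q ^ c) := by rw [pow_add]; ring
      _ ≤ ((q ^ a - 1) * (q - 1)) * (4 * (q ^ c - 1)) := Nat.mul_le_mul hD hA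
      _ = 2 * (2 * ((q ^ a - 1) * ((q ^ c - 1) * (q - 1)))) := by ring
  exact Nat.le_of_mul_le_mul_left main (by norm_num)

set_option maxHeartbeats 1000000 in
theorem stmt_10 (q n k t x : ℕ) (hq : 2 ≤ q) (ht : 0 < t) (htk : t + 2 ≤ k)
    (hn : 2 * k + 1 + (if q = 2 then 1 else 0) ≤ n)
    (hx : t + 1 ≤ x) (hxk : x ≤ k - 1) :
    fAux q n k t x > fAux q n k t (x + 1) := by
  have hδ : (if q = 2 then 1 else 0) ≤ 1 := by split <;> omega
  have htx : t ≤ x := by omega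
  have hxk' : x + 1 ≤ k := by omega
  have hkn : k < n := by omega
  unfold fAux
  simp only [gaussBinom_eq_gbAux hq]
  rw [show x + 1 - t = x - t + 1 from by omega, Finset.sum_range_succ, pow_succ]
  set G := gbAux q x t with hGdef
  set G' := gbAux q (x + 1) t with hG'def
  set M := gbAux q (k - t + 1) 1 with hMdef
  set N := gbAux q (n - x) (k - x) with hNdef
  set N' := gbAux q (n - (x + 1)) (k - (x + 1)) with hN'def
  set S := ∑ i ∈ Finset.range (x - t), M ^ i with hSdef
  -- basic identities
  have h1 : G' * (q ^ (x + 1 - t) - 1) = G * (q ^ (x + 1) - 1) := gbAux_left hq x t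
  have h2 : N * (q ^ (k - x) - 1) = N' * (q ^ (n - x) - 1) := by
    have e_a : n - x = (n - (x + 1)) + 1 := by omega
    have e_b : k - x = (k - (x + 1)) + 1 := by omega
    have hd := gbAux_diag hq (n - (x + 1)) (k - (x + 1))
    rw [hNdef, hN'def, e_a, e_b]
    exact hd
  have h3 : M * (q - 1) = q ^ (k - t + 1) - 1 := gbAux_one hq _
  -- positivity and size facts
  have hG : 1 ≤ G := gbAux_pos hq htx
  have hN' : 1 ≤ N' := gbAux_pos hq (by omega)
  have hM4 : 4 ≤ M := by
    have h := gbAux_ge_pow hq (le_refl 1) (show 1 ≤ k - t + 1 by omega)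
    calc (4 : ℕ) = 2 ^ 2 := by norm_num
      _ ≤ q ^ 2 := Nat.pow_le_pow_left hq 2
      _ ≤ q ^ (k - t + 1 - 1) := Nat.pow_le_pow_right (by omega) (by omega)
      _ ≤ M := h
  have hqt : 2 ≤ q ^ t := by
    calc (2 : ℕ) = 2 ^ 1 := by norm_num
      _ ≤ q ^ 1 := Nat.pow_le_pow_left hq 1
      _ ≤ q ^ t := Nat.pow_le_pow_right (by omega) (by omega)
  have hS : S + 1 ≤ M ^ (x - t) := geomSum_le_aux (by omega) _
  -- G' ≤ 2 G q^t
  have hG' : G' ≤ 2 * (G * q ^ t) := by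
    have hpc : 0 < q ^ (x + 1 - t) - 1 := by
      have : 4 ≤ q ^ (x + 1 - t) := by
        calc (4 : ℕ) = 2 ^ 2 := by norm_num
          _ ≤ q ^ 2 := Nat.pow_le_pow_left hq 2
          _ ≤ q ^ (x + 1 - t) := Nat.pow_le_pow_right (by omega) (by omega)
      omega
    apply Nat.le_of_mul_le_mul_right _ hpc
    rw [h1]
    have e : q ^ t * q ^ (x + 1 - t) = q ^ (x + 1) := by rw [← pow_add]; congr 1; omega
    have h4 : 4 * q ^ t ≤ q ^ (x + 1) := by
      have h4' : 4 ≤ q ^ (x + 1 - t) := by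
        calc (4 : ℕ) = 2 ^ 2 := by norm_num
          _ ≤ q ^ 2 := Nat.pow_le_pow_left hq 2
          _ ≤ q ^ (x + 1 - t) := Nat.pow_le_pow_right (by omega) (by omega)
      calc 4 * q ^ t = q ^ t * 4 := by ring
        _ ≤ q ^ t * q ^ (x + 1 - t) := Nat.mul_le_mul_left _ h4'
        _ = q ^ (x + 1) := e
    have e2 : 2 * q ^ t * (q ^ (x + 1 - t) - 1) = 2 * q ^ (x + 1) - 2 * q ^ t := by
      rw [Nat.mul_sub, mul_one, mul_assoc, e]
    have key : q ^ (x + 1) - 1 ≤ 2 * q ^ t * (q ^ (x + 1 - t) - 1) := by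
      rw [e2]; omega
    calc G * (q ^ (x + 1) - 1) ≤ G * (2 * q ^ t * (q ^ (x + 1 - t) - 1)) :=
          Nat.mul_le_mul_left _ key
      _ = 2 * (G * q ^ t) * (q ^ (x + 1 - t) - 1) := by ring
  -- 12 q^t ≤ N
  have hNbig : 12 * q ^ t ≤ N := by
    have hpow : q ^ (n - x - (k - x)) ≤ N := gbAux_ge_pow hq (by omega) (by omega)
    have enk : n - x - (k - x) = n - k := by omega
    rw [enk] at hpow
    have h12 : 12 * q ^ t ≤ q ^ (n - k) := by
      by_cases hq2 : q = 2
      · subst hq2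
        norm_num at hn
        have h : t + 4 ≤ n - k := by omega
        calc 12 * 2 ^ t ≤ 16 * 2 ^ t := by omega
          _ = 2 ^ (t + 4) := by rw [pow_add]; ring
          _ ≤ 2 ^ (n - k) := Nat.pow_le_pow_right (by omega) h
      · have h3q : 3 ≤ q := by omega
        simp only [if_neg hq2] at hn
        have h : t + 3 ≤ n - k := by omega
        calc 12 * q ^ t ≤ 27 * q ^ t := by omega
          _ = 3 ^ 3 * q ^ t := by norm_num
          _ ≤ q ^ 3 * q ^ t := Nat.mul_le_mul_right _ (Nat.pow_le_pow_left h3q 3)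
          _ = q ^ (t + 3) := by rw [← pow_add]; ring_nf
          _ ≤ q ^ (n - k) := Nat.pow_le_pow_right (by omega) h
    omega
  -- the core ratio inequality
  have hacond : t + (x + 1 - t) + 2 * (k - x) + (if q = 2 then 1 else 0) ≤ n - x := by
    by_cases hq2 : q = 2 <;> simp only [if_pos, if_neg, hq2] at hn ⊢ <;> omega
  have hstar := star_aux (q := q) (t := t) (c := x + 1 - t) (b := k - x) (a := n - x)
    hq (by omega) (by omega) (by omega) hacond
  rw [show t + (x + 1 - t) = x + 1 from by omega,
      show x + 1 - t + (k - x) = k - t + 1 from by omega] at hstar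
  have L1 : 3 * (G' * (M * N')) ≤ 2 * (G * N) := by
    have hP : 0 < (q ^ (x + 1 - t) - 1) * ((q - 1) * (q ^ (k - x) - 1)) := by
      have p1 : 2 ≤ q ^ (x + 1 - t) := by
        calc (2:ℕ) ≤ q := hq
          _ = q ^ 1 := (pow_one q).symm
          _ ≤ q ^ (x + 1 - t) := Nat.pow_le_pow_right (by omega) (by omega)
      have p2 : 2 ≤ q ^ (k - x) := by
        calc (2:ℕ) ≤ q := hq
          _ = q ^ 1 := (pow_one q).symm
          _ ≤ q ^ (k - x) := Nat.pow_le_pow_right (by omega) (by omega)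
      have : 0 < q ^ (x + 1 - t) - 1 := by omega
      have : 0 < q - 1 := by omega
      have : 0 < q ^ (k - x) - 1 := by omega
      positivity
    apply Nat.le_of_mul_le_mul_right _ hP
    calc 3 * (G' * (M * N')) * ((q ^ (x + 1 - t) - 1) * ((q - 1) * (q ^ (k - x) - 1)))
        = (G' * (q ^ (x + 1 - t) - 1)) * ((M * (q - 1)) * (N' * (q ^ (k - x) - 1))) * 3 := by
          ring
      _ = (G * (q ^ (x + 1) - 1)) * ((q ^ (k - t + 1) - 1) * (N' * (q ^ (k - x) - 1))) * 3 := by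
          rw [h1, h3]
      _ = (G * N') * (3 * ((q ^ (x + 1) - 1) * ((q ^ (k - t + 1) - 1) * (q ^ (k - x) - 1)))) := by
          ring
      _ ≤ (G * N') * (2 * ((q ^ (n - x) - 1) * ((q ^ (x + 1 - t) - 1) * (q - 1)))) :=
          Nat.mul_le_mul_left _ hstar
      _ = (N' * (q ^ (n - x) - 1)) * (G * ((q ^ (x + 1 - t) - 1) * (q - 1))) * 2 := by ring
      _ = (N * (q ^ (k - x) - 1)) * (G * ((q ^ (x + 1 - t) - 1) * (q - 1))) * 2 := by rw [h2]
      _ = 2 * (G * N) * ((q ^ (x + 1 - t) - 1) * ((q - 1) * (q ^ (k - x) - 1))) := by ring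
  -- final assembly
  have F1 : 3 * (G' * (M * N')) * M ^ (x - t) ≤ 2 * (G * N) * M ^ (x - t) :=
    Nat.mul_le_mul_right _ L1
  have F2 : G' * S ≤ 2 * (G * q ^ t) * S := Nat.mul_le_mul_right _ hG'
  have F3 : G' * M ^ (x - t) ≤ 2 * (G * q ^ t) * M ^ (x - t) := Nat.mul_le_mul_right _ hG'
  have F4 : G * q ^ t * S + G * q ^ t ≤ G * q ^ t * M ^ (x - t) := by
    calc G * q ^ t * S + G * q ^ t = G * q ^ t * (S + 1) := by ring
      _ ≤ G * q ^ t * M ^ (x - t) := Nat.mul_le_mul_left _ hS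
  have F5 : 12 * q ^ t * (G * M ^ (x - t)) ≤ N * (G * M ^ (x - t)) :=
    Nat.mul_le_mul_right _ hNbig
  have F6 : 2 ≤ G * q ^ t := by
    calc (2:ℕ) = 1 * 2 := by norm_num
      _ ≤ G * q ^ t := Nat.mul_le_mul hG hqt
  linarith [F1, F2, F3, F4, F5, F6, Nat.zero_le (G * S), Nat.zero_le (G * q ^ t)]
end

section
/- Let n, k, t be positive integers with k ≥ t + 3 and n ≥ 2k + 1 + δ, where δ = 1 if q = 2 and δ = 0 otherwise. Define g(n,k,t,x) = [x-t choose 1]_q [n-t-1 choose k-t-1]_q + q^(x-t) [k-x+1 choose 1]_q [k-t+1 choose 1]_q [n-t-2 choose k-t-2]_q + q^(x-t) [k-x+1 choose 1]_q + q^(x-t+1) [t choose 1]_q [k-t choose 1]_q [n-x choose k-x]_q + 2. Then g(n,k,t,x) < g(n,k,t,x+1) for all x with t+2 ≤ x ≤ k-1. -/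
/-- The quantity `g(n,k,t,x)` from the paper. -/
def gAux (q n k t x : ℕ) : ℕ :=
  gaussBinom q (x - t) 1 * gaussBinom q (n - t - 1) (k - t - 1) +
    q ^ (x - t) * gaussBinom q (k - x + 1) 1 * gaussBinom q (k - t + 1) 1 *
      gaussBinom q (n - t - 2) (k - t - 2) +
    q ^ (x - t) * gaussBinom q (k - x + 1) 1 +
    q ^ (x - t + 1) * gaussBinom q t 1 * gaussBinom q (k - t) 1 *
      gaussBinom q (n - x) (k - x) + 2

/-!
Write `[m] = [m choose 1]_q`, `C₁ = [n-t-1 choose k-t-1]_q`, `C₀ = [n-t-2 choose k-t-2]_q` and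
`X = [n-x choose k-x]_q`. Since `[a+1] = [a] + q^a` and `[r+1] = q [r] + 1`, passing from `g(x)`
to `g(x+1)` gains `q^(x-t) C₁` and loses at most `q^(x-t) ([k-t+1] C₀ + 1 + q [t] [k-t] X)`.
The second Pascal rule `[N+1 choose K+1] = [N choose K+1] + q^(N-K) [N choose K]` gives
`C₁ > q^(n-k) C₀`; the coefficients grow along diagonals, so `X ≤ C₀`; and
`[k-t+1] + q [t] [k-t] < q^(k+1) ≤ q^(n-k)`.
-/

open Finset

/-- Gaussian binomial coefficients through the `q`-Pascal rule. -/
def qBinom (q : ℕ) : ℕ → ℕ → ℕ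
  | _, 0 => 1
  | 0, _ + 1 => 0
  | n + 1, k + 1 => q ^ (k + 1) * qBinom q n (k + 1) + qBinom q n k

namespace qBinom

variable {q : ℕ}

@[simp]
theorem zero_right (n : ℕ) : qBinom q n 0 = 1 := by
  cases n <;> rfl

@[simp]
theorem zero_succ (k : ℕ) : qBinom q 0 (k + 1) = 0 := rfl

theorem succ_succ (n k : ℕ) :
    qBinom q (n + 1) (k + 1) = q ^ (k + 1) * qBinom q n (k + 1) + qBinom q n k := rfl

theorem eq_zero_of_lt : ∀ {n k : ℕ}, n < k → qBinom q n k = 0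
  | 0, _ + 1, _ => rfl
  | n + 1, k + 1, h => by
    rw [succ_succ, eq_zero_of_lt (by omega : n < k + 1), eq_zero_of_lt (by omega : n < k)]
    rfl

theorem le_succ_succ (n k : ℕ) : qBinom q n k ≤ qBinom q (n + 1) (k + 1) := by
  rw [succ_succ]
  exact Nat.le_add_left _ _

theorem le_add_add (n k j : ℕ) : qBinom q n k ≤ qBinom q (n + j) (k + j) :=
  monotone_nat_of_le_succ (f := fun j => qBinom q (n + j) (k + j))
    (fun _ => le_succ_succ _ _) (Nat.zero_le j)

theorem pos {n k : ℕ} (h : k ≤ n) : 0 < qBinom q n k := by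
  obtain ⟨m, rfl⟩ := Nat.exists_eq_add_of_le' h
  exact Nat.lt_of_lt_of_le Nat.one_pos (by simpa using le_add_add (q := q) m 0 k)

theorem add_succ_succ (m k : ℕ) :
    qBinom q (m + k + 1) (k + 1) = qBinom q (m + k) (k + 1) + q ^ m * qBinom q (m + k) k := by
  induction k generalizing m with
  | zero =>
    induction m with
    | zero => simp [succ_succ]
    | succ m ih =>
      simp only [add_zero, zero_right, mul_one] at ih ⊢
      conv_lhs => rw [succ_succ, ih, zero_right]
      rw [succ_succ, zero_right]
      ring
  | succ k ih =>
    induction m with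
    | zero =>
      rw [zero_add, succ_succ, eq_zero_of_lt (by omega : k + 1 < k + 1 + 1)]
      ring
    | succ m ihm =>
      have h := ih (m + 1)
      rw [show m + 1 + k = m + (k + 1) by ring] at h
      rw [show m + 1 + (k + 1) = m + (k + 1) + 1 by ring]
      conv_lhs => rw [succ_succ, ihm, h]
      rw [succ_succ (m + (k + 1)) (k + 1), succ_succ (m + (k + 1)) k]
      ring

theorem succ_succ_mul (n k : ℕ) :
    qBinom q (n + 1) (k + 1) * (q ^ (k + 1) - 1) = (q ^ (n + 1) - 1) * qBinom q n k := by
  rcases lt_or_ge n k with h | h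
  · simp [eq_zero_of_lt h, eq_zero_of_lt (Nat.succ_lt_succ h)]
  obtain ⟨m, rfl⟩ := Nat.exists_eq_add_of_le' h
  -- compare the two Pascal rules for `[m + k + 1 choose k + 1]_q`
  have h₁ := succ_succ (q := q) (m + k) k
  have h₂ := add_succ_succ (q := q) m k
  have h₃ : q ^ (k + 1) * qBinom q (m + k + 1) (k + 1) =
      q ^ (k + 1) * qBinom q (m + k) (k + 1) + q ^ (m + k + 1) * qBinom q (m + k) k := by
    rw [h₂]; ring
  rw [Nat.mul_sub_one, Nat.sub_one_mul, mul_comm]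
  omega

theorem succ_one_eq_mul_add (m : ℕ) : qBinom q (m + 1) 1 = q * qBinom q m 1 + 1 := by
  simp [succ_succ]

theorem succ_one_eq_add_pow (m : ℕ) : qBinom q (m + 1) 1 = qBinom q m 1 + q ^ m := by
  simpa using add_succ_succ (q := q) m 0

theorem right_one_lt_pow (hq : 2 ≤ q) (m : ℕ) : qBinom q m 1 < q ^ m := by
  induction m with
  | zero => simp
  | succ m ih =>
    rw [succ_one_eq_mul_add, pow_succ]
    nlinarith

theorem pow_mul_lt_add_succ_succ {m : ℕ} (hm : 0 < m) (k : ℕ) :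
    q ^ m * qBinom q (m + k) k < qBinom q (m + k + 1) (k + 1) := by
  rw [add_succ_succ]
  have := pos (q := q) (show k + 1 ≤ m + k by omega)
  omega

theorem succ_one_add_mul_lt (hq : 2 ≤ q) (s t : ℕ) :
    qBinom q (s + 1) 1 + q * qBinom q t 1 * qBinom q s 1 < q ^ (t + s + 1) := by
  have hT := right_one_lt_pow hq t
  have hU := right_one_lt_pow hq s
  have hq' : 1 < q * q ^ t := by nlinarith [Nat.one_le_pow t q (by omega)]
  -- the left side is `q [s] ([t] + 1) + 1 ≤ q (q^s - 1) q^t + 1`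
  rw [succ_one_eq_mul_add, pow_succ, pow_add]
  nlinarith [Nat.mul_le_mul_left (q * qBinom q s 1) hT, Nat.mul_le_mul_left (q * q ^ t) hU]

end qBinom

/-- `∏ i < k, (q^(n-i) - 1)`: `(q - 1)^k` times the `q`-analogue of `n (n-1) ⋯ (n-k+1)`,
kept free of division. -/
def qDescFactorial (q n k : ℕ) : ℕ :=
  ∏ i ∈ range k, (q ^ (n - i) - 1)

theorem qDescFactorial_succ_succ (q n k : ℕ) :
    qDescFactorial q (n + 1) (k + 1) = (q ^ (n + 1) - 1) * qDescFactorial q n k := by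
  simp [qDescFactorial, prod_range_succ', mul_comm]

theorem qDescFactorial_eq_qBinom_mul (q n k : ℕ) :
    qDescFactorial q n k = qBinom q n k * qDescFactorial q k k := by
  induction k generalizing n with
  | zero => simp [qDescFactorial]
  | succ k ih =>
    cases n with
    | zero => simp [qDescFactorial, prod_range_succ']
    | succ n =>
      rw [qDescFactorial_succ_succ, qDescFactorial_succ_succ, ih, ← mul_assoc,
        ← qBinom.succ_succ_mul]
      ring

theorem qDescFactorial_self_pos {q : ℕ} (hq : 2 ≤ q) (k : ℕ) : 0 < qDescFactorial q k k :=
  prod_pos fun i hi => Nat.sub_pos_of_lt (Nat.one_lt_pow (by simp at hi; omega) hq)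

theorem gaussBinom_eq_qBinom {q : ℕ} (hq : 2 ≤ q) (n k : ℕ) :
    gaussBinom q n k = qBinom q n k := by
  change qDescFactorial q n k / qDescFactorial q k k = _
  rw [qDescFactorial_eq_qBinom_mul, Nat.mul_div_cancel _ (qDescFactorial_self_pos hq k)]

theorem gAux_lt_gAux_succ_of_lt {q n k t x : ℕ} (hq : 2 ≤ q) (htx : t ≤ x) (hxk : x < k)
    (h : qBinom q (k - t + 1) 1 * qBinom q (n - t - 2) (k - t - 2) + 1 +
        q * qBinom q t 1 * qBinom q (k - t) 1 * qBinom q (n - x) (k - x) <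
      qBinom q (n - t - 1) (k - t - 1)) :
    gAux q n k t x < gAux q n k t (x + 1) := by
  simp only [gAux, gaussBinom_eq_qBinom hq]
  rw [show x + 1 - t = x - t + 1 by omega, show k - x + 1 = k - (x + 1) + 1 + 1 by omega,
    qBinom.succ_one_eq_add_pow (x - t), qBinom.succ_one_eq_mul_add (k - (x + 1) + 1),
    pow_succ _ (x - t + 1), pow_succ _ (x - t)]
  have := Nat.mul_lt_mul_of_pos_left h (pow_pos (by omega : 0 < q) (x - t))
  linarith [Nat.zero_le (q ^ (x - t) * q * q * qBinom q t 1 * qBinom q (k - t) 1 *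
    qBinom q (n - (x + 1)) (k - (x + 1)))]

theorem qBinom_step_ineq {q n k t x : ℕ} (hq : 2 ≤ q) (hx : t + 2 ≤ x) (hxk : x < k)
    (hn : 2 * k + 1 ≤ n) :
    qBinom q (k - t + 1) 1 * qBinom q (n - t - 2) (k - t - 2) + 1 +
        q * qBinom q t 1 * qBinom q (k - t) 1 * qBinom q (n - x) (k - x) <
      qBinom q (n - t - 1) (k - t - 1) := by
  have hX : qBinom q (n - x) (k - x) ≤ qBinom q (n - t - 2) (k - t - 2) := by
    have := qBinom.le_add_add (q := q) (n - x) (k - x) (x - t - 2)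
    rwa [show n - x + (x - t - 2) = n - t - 2 by omega,
      show k - x + (x - t - 2) = k - t - 2 by omega] at this
  have hC : q ^ (n - k) * qBinom q (n - t - 2) (k - t - 2) < qBinom q (n - t - 1) (k - t - 1) := by
    have := qBinom.pow_mul_lt_add_succ_succ (q := q) (m := n - k) (by omega) (k - t - 2)
    rwa [show n - k + (k - t - 2) = n - t - 2 by omega, show n - t - 2 + 1 = n - t - 1 by omega,
      show k - t - 2 + 1 = k - t - 1 by omega] at this
  have hE : qBinom q (k - t + 1) 1 + q * qBinom q t 1 * qBinom q (k - t) 1 < q ^ (n - k) :=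
    (qBinom.succ_one_add_mul_lt hq (k - t) t).trans_le (Nat.pow_le_pow_right (by omega) (by omega))
  have hC₀ : 1 ≤ qBinom q (n - t - 2) (k - t - 2) := qBinom.pos (by omega)
  calc qBinom q (k - t + 1) 1 * qBinom q (n - t - 2) (k - t - 2) + 1 +
        q * qBinom q t 1 * qBinom q (k - t) 1 * qBinom q (n - x) (k - x)
      ≤ (qBinom q (k - t + 1) 1 + q * qBinom q t 1 * qBinom q (k - t) 1 + 1) *
          qBinom q (n - t - 2) (k - t - 2) := by
        nlinarith [Nat.mul_le_mul_left (q * qBinom q t 1 * qBinom q (k - t) 1) hX]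
    _ ≤ q ^ (n - k) * qBinom q (n - t - 2) (k - t - 2) := Nat.mul_le_mul_right _ hE
    _ < qBinom q (n - t - 1) (k - t - 1) := hC

theorem stmt_11_general (q n k t x : ℕ) (hq : 2 ≤ q)
    (hn : 2 * k + 1 + (if q = 2 then 1 else 0) ≤ n)
    (hx : t + 2 ≤ x) (hxk : x ≤ k - 1) :
    gAux q n k t x < gAux q n k t (x + 1) :=
  gAux_lt_gAux_succ_of_lt hq (by omega) (by omega)
    (qBinom_step_ineq hq hx (by omega) ((Nat.le_add_right _ _).trans hn))

theorem stmt_11 (q n k t x : ℕ) (hq : 2 ≤ q) (ht : 0 < t) (htk : t + 3 ≤ k)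
    (hn : 2 * k + 1 + (if q = 2 then 1 else 0) ≤ n)
    (hx : t + 2 ≤ x) (hxk : x ≤ k - 1) :
    gAux q n k t x < gAux q n k t (x + 1) :=
  stmt_11_general q n k t x hq hn hx hxk
end

section
/- Let n, k, t be positive integers with k ≥ t + 1 and n ≥ 2k, and let V be an n-dimensional space over F_q. Suppose F ⊆ {k-subspaces of V} is almost t-intersecting and A is a subspace of V with dim(A) < τ_t(F) ≤ k. Then |F_A| ≤ [k-t+1 choose 1]_q^(τ_t(F) - dim A) [n - τ_t(F) choose k - τ_t(F)]_q + Σ_{i=0}^{τ_t(F) - dim A - 1} [k-t+1 choose 1]_q^i, where F_A = {F ∈ F : A ⊆ F}. -/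
/-!
Induction on `τ_t(F) - dim A`. If `dim A = τ_t(F)`, count all `k`-spaces through `A` by double
counting pairs `(W, x)` with `x ∈ W \ A`. If `dim A < τ_t(F)`, then `A` is not a `t`-cover, so some
`F₀ ∈ F` meets `A` in dimension `d < t`. Inside `F₀` pick `U ⊇ A ∩ F₀` of dimension
`d + (k - t + 1)`. Every `B ∈ F_A` except the (at most one) `B` with `dim (F₀ ∩ B) < t` meets `U`
in dimension `> d`, hence contains some `x ∈ U \ A` and so lies in `F_{A + ⟨x⟩}`; the spaces
`A + ⟨x⟩` with `x ∈ U \ A` are at most `[k-t+1 choose 1]_q` many. This gives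
`|F_A| ≤ 1 + [k-t+1 choose 1]_q · max_x |F_{A + ⟨x⟩}|`, which unrolls to the bound.
-/

open Module

/-- A family of subspaces is almost `t`-intersecting if each member meets all but at
most one member in dimension at least `t`. -/
def AlmostTIntersecting {K V : Type*} [Field K] [AddCommGroup V] [Module K V]
    (t : ℕ) (F : Set (Submodule K V)) : Prop :=
  ∀ A ∈ F, {B | B ∈ F ∧ finrank K ↥(A ⊓ B) < t}.Subsingleton

/-- `W` is a `t`-cover of the family `F`. -/
def IsTCover {K V : Type*} [Field K] [AddCommGroup V] [Module K V]
    (t : ℕ) (F : Set (Submodule K V)) (W : Submodule K V) : Prop :=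
  ∀ A ∈ F, t ≤ finrank K ↥(W ⊓ A)

/-- The `t`-covering number: the minimum dimension of a `t`-cover. -/
noncomputable def tauT {K V : Type*} [Field K] [AddCommGroup V] [Module K V]
    (t : ℕ) (F : Set (Submodule K V)) : ℕ :=
  sInf {d | ∃ W : Submodule K V, finrank K ↥W = d ∧ IsTCover t F W}

open Finset Submodule

theorem Set.Finite.card_filter_toFinset {α : Type*} {s : Set α} (hs : s.Finite) (p : α → Prop)
    [DecidablePred p] : #{x ∈ hs.toFinset | p x} = {x ∈ s | p x}.ncard := by
  rw [← Set.ncard_coe_finset, Finset.coe_filter]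
  simp only [Set.Finite.mem_toFinset]

theorem Nat.pow_sub_pow_eq_pow_mul {b a m : ℕ} (h : a ≤ m) :
    b ^ m - b ^ a = b ^ a * (b ^ (m - a) - 1) := by
  rw [Nat.mul_sub, mul_one, ← pow_add, Nat.add_sub_cancel' h]

theorem prod_range_pow_sub_one_pos {b : ℕ} (hb : 1 < b) (r : ℕ) :
    0 < ∏ i ∈ range r, (b ^ (r - i) - 1) :=
  prod_pos fun _ hi =>
    Nat.sub_pos_of_lt (Nat.one_lt_pow (Nat.sub_ne_zero_of_lt (mem_range.1 hi)) hb)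

theorem not_isTCover_of_finrank_lt_tauT {K V : Type*} [Field K] [AddCommGroup V] [Module K V]
    {t : ℕ} {F : Set (Submodule K V)} {A : Submodule K V} (hA : finrank K A < tauT t F) :
    ¬ IsTCover t F A :=
  fun h => hA.not_ge (Nat.sInf_le ⟨A, rfl, h⟩)

namespace Submodule

section FiniteDimensional

variable {K V : Type*} [Field K] [AddCommGroup V] [Module K V] [FiniteDimensional K V]

theorem exists_le_le_finrank_eq {D W : Submodule K V} (hDW : D ≤ W) :
    ∀ m, finrank K D + m ≤ finrank K W → ∃ U, D ≤ U ∧ U ≤ W ∧ finrank K U = finrank K D + m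
  | 0, _ => ⟨D, le_rfl, hDW, rfl⟩
  | m + 1, hm => by
    obtain ⟨U, hDU, hUW, hU⟩ := exists_le_le_finrank_eq hDW m (by omega)
    have hUW' : U < W := lt_of_le_of_ne hUW fun h => by subst h; omega
    obtain ⟨x, hxW, hxU⟩ := SetLike.exists_of_lt hUW'
    refine ⟨U ⊔ K ∙ x, le_sup_of_le_left hDU,
      sup_le hUW ((span_singleton_le_iff_mem x W).2 hxW), ?_⟩
    rw [finrank_sup_span_singleton hxU, hU, add_assoc]

theorem exists_mem_inf_notMem_of_finrank_lt {U W : Submodule K V} (hUW : U ≤ W)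
    {A B : Submodule K V}
    (h : finrank K ↥(U ⊓ A) + finrank K W < finrank K ↥(W ⊓ B) + finrank K U) :
    ∃ x ∈ U ⊓ B, x ∉ A := by
  by_contra! hUB
  have h1 := finrank_sup_add_finrank_inf_eq (W ⊓ B) U
  have h2 := finrank_mono (sup_le (inf_le_left : W ⊓ B ≤ W) hUW)
  have h3 := finrank_mono
    (le_inf inf_le_right (inf_le_left.trans inf_le_right) : W ⊓ B ⊓ U ≤ U ⊓ B)
  have h4 := finrank_mono (le_inf inf_le_left hUB : U ⊓ B ≤ U ⊓ A)
  omega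

end FiniteDimensional

end Submodule

section FiniteField

variable {K V : Type*} [Field K] [Fintype K] [AddCommGroup V] [Module K V] [FiniteDimensional K V]

local notation "q" => Fintype.card K

namespace Submodule

theorem ncard_eq_card_pow_finrank (C : Submodule K V) :
    (C : Set V).ncard = q ^ finrank K C := by
  have : Finite C := Module.finite_of_finite K
  have := Fintype.ofFinite C
  rw [← Nat.card_coe_set_eq, SetLike.coe_sort_coe, Nat.card_eq_fintype_card,
    card_eq_pow_finrank (K := K) (V := C)]

theorem ncard_coe_diff (C B : Submodule K V) :
    ((C : Set V) \ B).ncard = q ^ finrank K C - q ^ finrank K ↥(C ⊓ B) := by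
  have : Finite V := Module.finite_of_finite K
  rw [← ncard_eq_card_pow_finrank, ← ncard_eq_card_pow_finrank, coe_inf,
    ← Set.ncard_inter_add_ncard_sdiff_eq_ncard (C : Set V) B]
  omega

end Submodule

theorem ncard_superspaces_mul_le {k M : ℕ} {A : Submodule K V} (hAk : finrank K A ≤ k)
    (hM : ∀ x ∉ A, {W : Submodule K V | finrank K W = k ∧ A ⊔ K ∙ x ≤ W}.ncard ≤ M) :
    {W : Submodule K V | finrank K W = k ∧ A ≤ W}.ncard * (q ^ (k - finrank K A) - 1) ≤
      (q ^ (finrank K V - finrank K A) - 1) * M := by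
  classical
  have : Finite V := Module.finite_of_finite K
  have : Finite (Submodule K V) := Finite.of_injective _ SetLike.coe_injective
  set a := finrank K A
  set S := {W : Submodule K V | finrank K W = k ∧ A ≤ W}
  have hS := S.toFinite
  have hT := (((⊤ : Submodule K V) : Set V) \ A).toFinite
  have hdouble : #hS.toFinset * (q ^ k - q ^ a) ≤ #hT.toFinset * M := by
    refine card_mul_le_card_mul (fun W x => x ∈ W) (fun W hW => ?_) (fun x hx => ?_)
    · rw [Set.Finite.mem_toFinset] at hW
      have hWA : ((W : Set V) \ A).ncard = q ^ k - q ^ a := by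
        rw [ncard_coe_diff, inf_eq_right.2 hW.2, hW.1]
      rw [bipartiteAbove, hT.card_filter_toFinset, ← hWA]
      refine le_of_eq (congrArg _ (Set.ext fun y => ?_))
      simp only [Set.mem_sdiff, SetLike.mem_coe, Set.mem_ofPred_eq, mem_top]
      tauto
    · rw [Set.Finite.mem_toFinset] at hx
      rw [bipartiteBelow, hS.card_filter_toFinset]
      refine le_of_eq_of_le (congrArg _ (Set.ext fun W => ?_)) (hM x hx.2)
      simp only [Set.mem_ofPred_eq, sup_le_iff, span_singleton_le_iff_mem, S]
      tauto
  rw [← Set.ncard_eq_toFinset_card, ← Set.ncard_eq_toFinset_card, ncard_coe_diff, finrank_top,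
    inf_eq_right.2 le_top, Nat.pow_sub_pow_eq_pow_mul hAk,
    Nat.pow_sub_pow_eq_pow_mul (finrank_le A)] at hdouble
  refine Nat.le_of_mul_le_mul_left ?_ (pow_pos (Fintype.card_pos (α := K)) a)
  calc q ^ a * (S.ncard * (q ^ (k - a) - 1)) = S.ncard * (q ^ a * (q ^ (k - a) - 1)) := by ring
    _ ≤ _ := hdouble
    _ = _ := by ring

theorem ncard_superspaces_mul_prod_le {k : ℕ} (r : ℕ) :
    ∀ A : Submodule K V, finrank K A + r = k →
      {W : Submodule K V | finrank K W = k ∧ A ≤ W}.ncard * ∏ i ∈ range r, (q ^ (r - i) - 1) ≤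
        ∏ i ∈ range r, (q ^ (finrank K V - finrank K A - i) - 1) := by
  induction r with
  | zero =>
    intro A hA
    simp only [range_zero, prod_empty, mul_one]
    refine (Set.ncard_le_ncard (t := {A}) ?_).trans (Set.ncard_singleton A).le
    rintro W ⟨hW, hAW⟩
    exact (eq_of_le_of_finrank_eq hAW (by omega)).symm
  | succ r ih =>
    intro A hA
    set a := finrank K A
    set P := ∏ i ∈ range r, (q ^ (r - i) - 1)
    set Q := ∏ i ∈ range r, (q ^ (finrank K V - a - (i + 1)) - 1)
    have hP : 0 < P := prod_range_pow_sub_one_pos Fintype.one_lt_card r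
    have hstep := ncard_superspaces_mul_le (M := Q / P) (by omega : a ≤ k) fun x hx => by
      have hAx := finrank_sup_span_singleton hx
      have := ih (A ⊔ K ∙ x) (by omega)
      rw [Nat.le_div_iff_mul_le hP]
      refine this.trans_eq (prod_congr rfl fun i _ => ?_)
      rw [hAx, Nat.sub_sub, Nat.sub_sub, add_assoc, add_comm 1 i]
    rw [show k - a = r + 1 by omega] at hstep
    rw [prod_range_succ', prod_range_succ']
    simp only [Nat.add_sub_add_right, Nat.sub_zero]
    calc _ = _ * (q ^ (r + 1) - 1) * P := by ring
      _ ≤ (q ^ (finrank K V - a) - 1) * (Q / P) * P := Nat.mul_le_mul_right P hstep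
      _ ≤ (q ^ (finrank K V - a) - 1) * Q := by
        rw [mul_assoc]; exact Nat.mul_le_mul_left _ (Nat.div_mul_le_self Q P)
      _ = _ := mul_comm _ _

theorem ncard_superspaces_le_gaussBinom {k : ℕ} {A : Submodule K V} (hAk : finrank K A ≤ k) :
    {W : Submodule K V | finrank K W = k ∧ A ≤ W}.ncard ≤
      gaussBinom q (finrank K V - finrank K A) (k - finrank K A) := by
  rw [gaussBinom, Nat.le_div_iff_mul_le (prod_range_pow_sub_one_pos Fintype.one_lt_card _)]
  exact ncard_superspaces_mul_prod_le _ A (by omega)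

theorem ncard_image_sup_span_le_gaussBinom (A U : Submodule K V) :
    ((fun x => A ⊔ K ∙ x) '' ((U : Set V) \ A)).ncard ≤
      gaussBinom q (finrank K U - finrank K ↥(U ⊓ A)) 1 := by
  classical
  have : Finite V := Module.finite_of_finite K
  set d := finrank K ↥(U ⊓ A)
  set f : V → Submodule K V := fun x => A ⊔ K ∙ x
  have hT := ((U : Set V) \ A).toFinite
  -- the fibre of `f` through `x₀` contains `(f x₀ ⊓ U) \ A`, and `U ⊓ A < f x₀ ⊓ U`
  have hfiber : ∀ A' ∈ hT.toFinset.image f,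
      q ^ (d + 1) - q ^ d ≤ #{x ∈ hT.toFinset | f x = A'} := by
    simp only [mem_image, Set.Finite.mem_toFinset]
    rintro _ ⟨x₀, ⟨hx₀U, hx₀A⟩, rfl⟩
    rw [hT.card_filter_toFinset]
    have hd : d + 1 ≤ finrank K ↥(f x₀ ⊓ U) := by
      have hx₀' : x₀ ∉ U ⊓ A := fun h => hx₀A (mem_inf.1 h).2
      rw [← finrank_sup_span_singleton hx₀']
      exact finrank_mono (sup_le (le_inf (inf_le_right.trans le_sup_left) inf_le_left)
        (le_inf le_sup_right ((span_singleton_le_iff_mem _ _).2 hx₀U)))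
    have hinf : f x₀ ⊓ U ⊓ A = U ⊓ A :=
      le_antisymm (le_inf (inf_le_left.trans inf_le_right) inf_le_right)
        (le_inf (le_inf (inf_le_right.trans le_sup_left) inf_le_left) inf_le_right)
    calc q ^ (d + 1) - q ^ d ≤ q ^ finrank K ↥(f x₀ ⊓ U) - q ^ d :=
          Nat.sub_le_sub_right (Nat.pow_le_pow_right Fintype.card_pos hd) _
      _ = (((f x₀ ⊓ U : Submodule K V) : Set V) \ A).ncard := by rw [ncard_coe_diff, hinf]
      _ ≤ _ := by
        refine Set.ncard_le_ncard fun x ⟨hx, hxA⟩ => ⟨⟨(mem_inf.1 hx).2, hxA⟩, ?_⟩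
        refine eq_of_le_of_finrank_eq
          (sup_le le_sup_left ((span_singleton_le_iff_mem _ _).2 (mem_inf.1 hx).1)) ?_
        rw [finrank_sup_span_singleton hxA, finrank_sup_span_singleton hx₀A]
  have hcount := mul_card_image_le_card _ _ hfiber
  rw [← Set.ncard_coe_finset, coe_image, Set.Finite.coe_toFinset, ← Set.ncard_eq_toFinset_card,
    ncard_coe_diff, Nat.pow_sub_pow_eq_pow_mul (Nat.le_add_right d 1),
    Nat.pow_sub_pow_eq_pow_mul (finrank_mono inf_le_left), Nat.add_sub_cancel_left,
    pow_one] at hcount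
  rw [gaussBinom, prod_range_one, prod_range_one, Nat.sub_zero, Nat.sub_zero, pow_one,
    Nat.le_div_iff_mul_le (Nat.sub_pos_of_lt Fintype.one_lt_card)]
  refine Nat.le_of_mul_le_mul_left ?_ (pow_pos (Fintype.card_pos (α := K)) d)
  calc _ = q ^ d * (q - 1) * (f '' ((U : Set V) \ A)).ncard := by ring
    _ ≤ _ := hcount

theorem ncard_superspaces_le_one_add_mul {F : Set (Submodule K V)} {k t M : ℕ}
    (hdim : ∀ B ∈ F, finrank K B = k) (hF : AlmostTIntersecting t F) (htk : t ≤ k)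
    {A : Submodule K V} (hA : ¬ IsTCover t F A)
    (hM : ∀ x ∉ A, {B | B ∈ F ∧ A ⊔ K ∙ x ≤ B}.ncard ≤ M) :
    {B | B ∈ F ∧ A ≤ B}.ncard ≤ 1 + gaussBinom q (k - t + 1) 1 * M := by
  have : Finite V := Module.finite_of_finite K
  have : Finite (Submodule K V) := Finite.of_injective _ SetLike.coe_injective
  obtain ⟨F₀, hF₀, hAF₀⟩ : ∃ F₀ ∈ F, finrank K ↥(A ⊓ F₀) < t := by simpa [IsTCover] using hA
  obtain ⟨U, hU, hUF₀, hdimU⟩ := exists_le_le_finrank_eq (inf_le_right : A ⊓ F₀ ≤ F₀) (k - t + 1)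
    (by rw [hdim F₀ hF₀]; omega)
  have hUA : U ⊓ A = A ⊓ F₀ :=
    le_antisymm (le_inf inf_le_right (inf_le_left.trans hUF₀)) (le_inf hU inf_le_left)
  set S := (fun x => A ⊔ K ∙ x) '' ((U : Set V) \ A)
  have hS : S.Finite := S.toFinite
  have hcover : {B | B ∈ F ∧ A ≤ B} ⊆
      {B | B ∈ F ∧ finrank K ↥(F₀ ⊓ B) < t} ∪ ⋃ A' ∈ hS.toFinset, {B | B ∈ F ∧ A' ≤ B} := by
    rintro B ⟨hB, hAB⟩
    by_cases hBt : finrank K ↥(F₀ ⊓ B) < t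
    · exact Or.inl ⟨hB, hBt⟩
    obtain ⟨x, hx, hxA⟩ := exists_mem_inf_notMem_of_finrank_lt hUF₀ (A := A) (B := B)
      (by rw [hUA, hdim F₀ hF₀]; omega)
    refine Or.inr (Set.mem_biUnion (x := A ⊔ K ∙ x) ?_ ⟨hB, sup_le hAB ?_⟩)
    · exact hS.mem_toFinset.2 ⟨x, ⟨hx.1, hxA⟩, rfl⟩
    · exact (span_singleton_le_iff_mem _ _).2 hx.2
  have hexc : {B | B ∈ F ∧ finrank K ↥(F₀ ⊓ B) < t}.ncard ≤ 1 :=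
    (Set.ncard_le_one (hF F₀ hF₀).finite).2 fun _ h₁ _ h₂ => hF F₀ hF₀ h₁ h₂
  have hbranch : ∀ A' ∈ hS.toFinset, {B | B ∈ F ∧ A' ≤ B}.ncard ≤ M := by
    simp only [Set.Finite.mem_toFinset]
    rintro _ ⟨x, ⟨-, hxA⟩, rfl⟩
    exact hM x hxA
  have hcard : #hS.toFinset ≤ gaussBinom q (k - t + 1) 1 := by
    rw [← Set.ncard_eq_toFinset_card]
    refine (ncard_image_sup_span_le_gaussBinom A U).trans_eq ?_
    rw [hdimU, hUA, Nat.add_sub_cancel_left]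
  calc {B | B ∈ F ∧ A ≤ B}.ncard
      ≤ {B | B ∈ F ∧ finrank K ↥(F₀ ⊓ B) < t}.ncard +
          (⋃ A' ∈ hS.toFinset, {B | B ∈ F ∧ A' ≤ B}).ncard :=
        (Set.ncard_le_ncard hcover).trans (Set.ncard_union_le _ _)
    _ ≤ 1 + #hS.toFinset * M :=
        add_le_add hexc ((set_ncard_biUnion_le _ _).trans (sum_le_card_nsmul _ _ _ hbranch))
    _ ≤ 1 + gaussBinom q (k - t + 1) 1 * M := by gcongr

theorem ncard_superspaces_le_of_finrank_add_eq {F : Set (Submodule K V)} {k t : ℕ}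
    (hdim : ∀ B ∈ F, finrank K B = k) (hF : AlmostTIntersecting t F) (htk : t ≤ k)
    (hτ : tauT t F ≤ k) (m : ℕ) :
    ∀ A : Submodule K V, finrank K A + m = tauT t F →
      {B | B ∈ F ∧ A ≤ B}.ncard ≤
        gaussBinom q (k - t + 1) 1 ^ m * gaussBinom q (finrank K V - tauT t F) (k - tauT t F) +
          ∑ i ∈ range m, gaussBinom q (k - t + 1) 1 ^ i := by
  induction m with
  | zero =>
    intro A hA
    have : Finite V := Module.finite_of_finite K
    have : Finite (Submodule K V) := Finite.of_injective _ SetLike.coe_injective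
    rw [pow_zero, one_mul, range_zero, sum_empty, add_zero, ← hA, add_zero]
    refine (Set.ncard_le_ncard ?_).trans (ncard_superspaces_le_gaussBinom (k := k) (by omega))
    exact fun B hB => ⟨hdim B hB.1, hB.2⟩
  | succ m ih =>
    intro A hA
    refine (ncard_superspaces_le_one_add_mul hdim hF htk
      (not_isTCover_of_finrank_lt_tauT (by omega)) fun x hx => ih (A ⊔ K ∙ x)
        (by rw [finrank_sup_span_singleton hx]; omega)).trans_eq ?_
    rw [geom_sum_succ]
    ring

end FiniteField

theorem stmt_14_general {K V : Type*} [Field K] [Fintype K] [AddCommGroup V] [Module K V]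
    [FiniteDimensional K V] (q n k t : ℕ) (hq : Fintype.card K = q)
    (hn : finrank K V = n) (htk : t + 1 ≤ k)
    (F : Set (Submodule K V)) (hdim : ∀ A ∈ F, finrank K ↥A = k)
    (hF : AlmostTIntersecting t F) (htau : tauT t F ≤ k)
    (A : Submodule K V) (hA : finrank K ↥A < tauT t F) :
    {B | B ∈ F ∧ A ≤ B}.ncard ≤
      gaussBinom q (k - t + 1) 1 ^ (tauT t F - finrank K ↥A) *
          gaussBinom q (n - tauT t F) (k - tauT t F) +
        ∑ i ∈ Finset.range (tauT t F - finrank K ↥A),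
          gaussBinom q (k - t + 1) 1 ^ i := by
  subst hq hn
  exact ncard_superspaces_le_of_finrank_add_eq hdim hF (by omega) htau _ A (by omega)

theorem stmt_14 {K V : Type*} [Field K] [Fintype K] [AddCommGroup V] [Module K V]
    [FiniteDimensional K V] (q n k t : ℕ) (hq : Fintype.card K = q)
    (hn : finrank K V = n) (hk : 0 < k) (ht : 0 < t) (htk : t + 1 ≤ k) (hnk : 2 * k ≤ n)
    (F : Set (Submodule K V)) (hdim : ∀ A ∈ F, finrank K ↥A = k)
    (hF : AlmostTIntersecting t F) (htau : tauT t F ≤ k)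
    (A : Submodule K V) (hA : finrank K ↥A < tauT t F) :
    {B | B ∈ F ∧ A ≤ B}.ncard ≤
      gaussBinom q (k - t + 1) 1 ^ (tauT t F - finrank K ↥A) *
          gaussBinom q (n - tauT t F) (k - tauT t F) +
        ∑ i ∈ Finset.range (tauT t F - finrank K ↥A),
          gaussBinom q (k - t + 1) 1 ^ i :=
  stmt_14_general q n k t hq hn htk F hdim hF htau A hA
end

section
/- Let n, k, t be positive integers with k ≥ t + 1 and n ≥ 2k, and let V be an n-dimensional space over F_q. Suppose F ⊆ {k-subspaces of V} is a maximal almost t-intersecting family with τ_t(F) ≤ k, and let T be the set of all t-covers of F of dimension τ_t(F). Then T is t-intersecting: dim(T₁ ∩ T₂) ≥ t for all T₁, T₂ ∈ T. -/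
open Module

section Aux

variable {K V : Type*} [Field K] [AddCommGroup V] [Module K V] [FiniteDimensional K V]

/-- There is a subspace of any prescribed dimension meeting a given subspace trivially,
provided the dimensions fit. -/
lemma aux_exists_disjoint (U : Submodule K V) (m : ℕ)
    (h : finrank K ↥U + m ≤ finrank K V) :
    ∃ W : Submodule K V, finrank K ↥W = m ∧ W ⊓ U = ⊥ := by
  induction m with
  | zero => exact ⟨⊥, finrank_bot K V, bot_inf_eq U⟩
  | succ m ih =>
    obtain ⟨W, hWm, hWU⟩ := ih (by omega)
    have h1 := Submodule.finrank_sup_add_finrank_inf_eq U W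
    have hsup : finrank K ↥(U ⊔ W) < finrank K V := by omega
    have hne : U ⊔ W ≠ ⊤ := by
      intro hcon
      rw [hcon, finrank_top] at hsup; omega
    have hlt : U ⊔ W < (⊤ : Submodule K V) := lt_top_iff_ne_top.mpr hne
    obtain ⟨v, -, hvn⟩ := SetLike.exists_of_lt hlt
    have hv0 : v ≠ 0 := by rintro rfl; exact hvn (Submodule.zero_mem _)
    have hvW : v ∉ W := fun hw => hvn (Submodule.mem_sup_right hw)
    refine ⟨W ⊔ Submodule.span K {v}, ?_, ?_⟩
    · have hdisj : W ⊓ Submodule.span K {v} = ⊥ := by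
        rw [← disjoint_iff]
        exact Submodule.disjoint_span_singleton.mpr fun h => absurd h hvW
      have h2 := Submodule.finrank_sup_add_finrank_inf_eq W (Submodule.span K {v})
      rw [hdisj, finrank_bot, finrank_span_singleton hv0] at h2
      omega
    · rw [eq_bot_iff]
      intro x hx
      rw [Submodule.mem_inf] at hx
      obtain ⟨w, hw, y, hy, rfl⟩ := Submodule.mem_sup.mp hx.1
      obtain ⟨c, rfl⟩ := Submodule.mem_span_singleton.mp hy
      by_cases hc : c = 0
      · subst hc
        have : w ∈ W ⊓ U := ⟨hw, by simpa using hx.2⟩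
        rw [hWU] at this
        simpa [this] using this
      · exfalso
        have hcv : c • v ∈ U ⊔ W := by
          have h1 : w + c • v ∈ U ⊔ W := Submodule.mem_sup_left hx.2
          have h2 : w ∈ U ⊔ W := Submodule.mem_sup_right hw
          have := Submodule.sub_mem _ h1 h2
          simpa using this
        have : v ∈ U ⊔ W := by
          have := Submodule.smul_mem _ c⁻¹ hcv
          rwa [smul_smul, inv_mul_cancel₀ hc, one_smul] at this
        exact hvn this

lemma aux_sup_inf {T U W : Submodule K V} (hTU : T ≤ U) (hWU : W ⊓ U = ⊥) :
    (T ⊔ W) ⊓ U = T := by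
  refine le_antisymm ?_ (le_inf le_sup_left hTU)
  intro x hx
  rw [Submodule.mem_inf] at hx
  obtain ⟨s, hs, w, hw, rfl⟩ := Submodule.mem_sup.mp hx.1
  have hwU : w ∈ U := by
    have : (s + w) - s ∈ U := Submodule.sub_mem _ hx.2 (hTU hs)
    simpa using this
  have : w ∈ W ⊓ U := ⟨hw, hwU⟩
  rw [hWU, Submodule.mem_bot] at this
  simpa [this] using hs

lemma aux_sup_finrank {T U W : Submodule K V} (hTU : T ≤ U) (hWU : W ⊓ U = ⊥) :
    finrank K ↥(T ⊔ W) = finrank K ↥T + finrank K ↥W := by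
  have hTW : T ⊓ W = ⊥ := by
    rw [eq_bot_iff, ← hWU]
    exact le_inf inf_le_right (inf_le_left.trans hTU)
  have := Submodule.finrank_sup_add_finrank_inf_eq T W
  rw [hTW, finrank_bot] at this
  omega

/-- Extension lemma: any subspace `T ≤ U` can be extended to a `k`-dimensional subspace
meeting `U` exactly in `T`. -/
lemma aux_extend {T U : Submodule K V} (hTU : T ≤ U) (k : ℕ) (hTk : finrank K ↥T ≤ k)
    (h : finrank K ↥U + (k - finrank K ↥T) ≤ finrank K V) :
    ∃ A : Submodule K V, T ≤ A ∧ finrank K ↥A = k ∧ A ⊓ U = T := by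
  obtain ⟨W, hWm, hWU⟩ := aux_exists_disjoint U (k - finrank K ↥T) h
  refine ⟨T ⊔ W, le_sup_left, ?_, aux_sup_inf hTU hWU⟩
  rw [aux_sup_finrank hTU hWU, hWm]
  omega

/-- Two distinct extensions, when `T < U` and `dim T < k`. -/
lemma aux_two_extend {T U : Submodule K V} (hTU : T < U) (k : ℕ)
    (hTk : finrank K ↥T < k)
    (h : finrank K ↥U + (k - finrank K ↥T) ≤ finrank K V) :
    ∃ A A' : Submodule K V, A ≠ A' ∧
      (T ≤ A ∧ finrank K ↥A = k ∧ A ⊓ U = T) ∧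
      (T ≤ A' ∧ finrank K ↥A' = k ∧ A' ⊓ U = T) := by
  obtain ⟨W, hWm, hWU⟩ := aux_exists_disjoint U (k - finrank K ↥T) h
  obtain ⟨u, huU, huT⟩ := SetLike.exists_of_lt hTU
  have hWne : W ≠ ⊥ := by
    intro hcon
    rw [hcon, finrank_bot] at hWm
    omega
  obtain ⟨w₁, hw₁W, hw₁0⟩ := Submodule.exists_mem_ne_zero_of_ne_bot hWne
  have hw₁U : w₁ ∉ U := by
    intro hcon
    have : w₁ ∈ W ⊓ U := ⟨hw₁W, hcon⟩
    rw [hWU, Submodule.mem_bot] at this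
    exact hw₁0 this
  obtain ⟨f, hf0, hfmap⟩ := U.exists_dual_map_eq_bot_of_notMem hw₁U inferInstance
  set φ : V →ₗ[K] K := (f w₁)⁻¹ • f with hφdef
  have hφU : ∀ x ∈ U, φ x = 0 := by
    intro x hx
    have : f x ∈ U.map f := Submodule.mem_map_of_mem hx
    rw [hfmap, Submodule.mem_bot] at this
    simp [hφdef, this]
  have hφw₁ : φ w₁ = 1 := by
    simp [hφdef, inv_mul_cancel₀ hf0]
  have hφu : φ u = 0 := hφU u huU
  -- the transvection x ↦ x + φ(x) • u
  set g : V →ₗ[K] V := LinearMap.id + φ.smulRight u with hgdef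
  set g' : V →ₗ[K] V := LinearMap.id - φ.smulRight u with hg'def
  have hgapply : ∀ x, g x = x + φ x • u := fun x => rfl
  have hg'apply : ∀ x, g' x = x - φ x • u := fun x => rfl
  have hcomp1 : g'.comp g = LinearMap.id := by
    ext x
    simp only [LinearMap.comp_apply, LinearMap.id_apply, hgapply, hg'apply, map_add,
      map_smul, hφu, smul_eq_mul, mul_zero, add_zero, smul_zero]
    abel
  have hcomp2 : g.comp g' = LinearMap.id := by
    ext x
    simp only [LinearMap.comp_apply, LinearMap.id_apply, hgapply, hg'apply, map_sub,
      map_smul, hφu, smul_eq_mul, mul_zero, sub_zero, smul_zero]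
    abel
  set e : V ≃ₗ[K] V := LinearEquiv.ofLinear g g' hcomp2 hcomp1 with hedef
  set W' : Submodule K V := W.map (e : V →ₗ[K] V) with hW'def
  have hW'm : finrank K ↥W' = k - finrank K ↥T := by
    rw [hW'def, LinearEquiv.finrank_map_eq, hWm]
  have hW'U : W' ⊓ U = ⊥ := by
    rw [eq_bot_iff]
    intro x hx
    rw [Submodule.mem_inf] at hx
    obtain ⟨w, hwW, rfl⟩ := Submodule.mem_map.mp hx.1
    have hgw : (e : V →ₗ[K] V) w = w + φ w • u := rfl
    have hwU : w ∈ U := by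
      have : (w + φ w • u) - φ w • u ∈ U := by
        refine Submodule.sub_mem _ ?_ (Submodule.smul_mem _ _ huU)
        rw [← hgw]; exact hx.2
      simpa using this
    have : w ∈ W ⊓ U := ⟨hwW, hwU⟩
    rw [hWU, Submodule.mem_bot] at this
    subst this
    simp [hgw]
  refine ⟨T ⊔ W, T ⊔ W', ?_, ⟨le_sup_left, ?_, aux_sup_inf hTU.le hWU⟩,
    ⟨le_sup_left, ?_, aux_sup_inf hTU.le hW'U⟩⟩
  · -- the two extensions are distinct
    intro hcon
    have hw₁uA : w₁ + u ∈ T ⊔ W := by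
      rw [hcon]
      refine Submodule.mem_sup_right ?_
      refine Submodule.mem_map.mpr ⟨w₁, hw₁W, ?_⟩
      show w₁ + φ w₁ • u = w₁ + u
      rw [hφw₁, one_smul]
    have hw₁A : w₁ ∈ T ⊔ W := Submodule.mem_sup_right hw₁W
    have huA : u ∈ T ⊔ W := by
      have : (w₁ + u) - w₁ ∈ T ⊔ W := Submodule.sub_mem _ hw₁uA hw₁A
      simpa using this
    have : u ∈ (T ⊔ W) ⊓ U := ⟨huA, huU⟩
    rw [aux_sup_inf hTU.le hWU] at this
    exact huT this
  · rw [aux_sup_finrank hTU.le hWU, hWm]; omega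
  · rw [aux_sup_finrank hTU.le hW'U, hW'm]; omega

end Aux

theorem stmt_15 {K V : Type*} [Field K] [Fintype K] [AddCommGroup V] [Module K V]
    [FiniteDimensional K V] (n k t : ℕ)
    (hn : finrank K V = n) (hk : 0 < k) (ht : 0 < t) (htk : t + 1 ≤ k) (hnk : 2 * k ≤ n)
    (F : Set (Submodule K V)) (hdim : ∀ A ∈ F, finrank K ↥A = k)
    (hF : AlmostTIntersecting t F)
    (hmax : ∀ G : Set (Submodule K V), (∀ A ∈ G, finrank K ↥A = k) →
      AlmostTIntersecting t G → F ⊆ G → G = F)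
    (htau : tauT t F ≤ k) :
    ∀ T₁ T₂ : Submodule K V,
      finrank K ↥T₁ = tauT t F → IsTCover t F T₁ →
      finrank K ↥T₂ = tauT t F → IsTCover t F T₂ →
      t ≤ finrank K ↥(T₁ ⊓ T₂) := by
  intro T₁ T₂ h1 hc1 h2 hc2
  by_contra hcon
  push_neg at hcon
  -- By maximality, any `k`-subspace `t`-intersecting every member of `F` belongs to `F`.
  have hmem : ∀ A : Submodule K V, finrank K ↥A = k →
      (∀ B ∈ F, t ≤ finrank K ↥(A ⊓ B)) → A ∈ F := by
    intro A hA hAB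
    have hG : insert A F = F := by
      refine hmax (insert A F) ?_ ?_ (Set.subset_insert _ _)
      · rintro B hB
        rcases Set.mem_insert_iff.mp hB with rfl | hBF
        · exact hA
        · exact hdim B hBF
      · intro B hB
        rcases Set.mem_insert_iff.mp hB with rfl | hBF
        · -- B = A : the bad set is empty
          intro C hC C' hC'
          exfalso
          rcases Set.mem_insert_iff.mp hC.1 with hCA | hCF
          · have h4 : finrank K ↥(B ⊓ C) = k := by rw [hCA, inf_idem]; exact hA
            have h5 := hC.2
            omega
          · exact absurd (hAB C hCF) (not_le.mpr hC.2)
        · intro C hC C' hC'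
          have hCF : C ∈ F := by
            rcases Set.mem_insert_iff.mp hC.1 with rfl | h
            · exfalso
              have := hAB B hBF
              rw [inf_comm] at this
              exact absurd this (not_le.mpr hC.2)
            · exact h
          have hC'F : C' ∈ F := by
            rcases Set.mem_insert_iff.mp hC'.1 with rfl | h
            · exfalso
              have := hAB B hBF
              rw [inf_comm] at this
              exact absurd this (not_le.mpr hC'.2)
            · exact h
          exact hF B hBF ⟨hCF, hC.2⟩ ⟨hC'F, hC'.2⟩
    rw [← hG]
    exact Set.mem_insert _ _
  have hT1k : finrank K ↥T₁ ≤ k := h1 ▸ htau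
  have hT2k : finrank K ↥T₂ ≤ k := h2 ▸ htau
  -- Build A₁ ⊇ T₁ of dimension k with A₁ ⊓ (T₁ ⊔ T₂) = T₁.
  have hsum1 := Submodule.finrank_sup_add_finrank_inf_eq T₁ T₂
  obtain ⟨A₁, hT₁A₁, hA₁k, hA₁inf⟩ :=
    aux_extend (le_sup_left : T₁ ≤ T₁ ⊔ T₂) k hT1k (by rw [hn]; omega)
  have hA₁F : A₁ ∈ F := by
    refine hmem A₁ hA₁k fun B hB => le_trans (hc1 B hB) (Submodule.finrank_mono ?_)
    exact inf_le_inf_right B hT₁A₁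
  have hA₁T₂ : finrank K ↥(A₁ ⊓ T₂) < t := by
    refine lt_of_le_of_lt (Submodule.finrank_mono ?_) hcon
    refine le_inf ?_ inf_le_right
    calc A₁ ⊓ T₂ ≤ A₁ ⊓ (T₁ ⊔ T₂) := inf_le_inf_left A₁ le_sup_right
    _ = T₁ := hA₁inf
  rcases eq_or_lt_of_le hT2k with heq | hlt2
  · -- If dim T₂ = k then T₂ ∈ F, contradicting that T₁ is a t-cover.
    have hT₂F : T₂ ∈ F := hmem T₂ heq hc2
    exact absurd (hc1 T₂ hT₂F) (not_le.mpr hcon)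
  · -- Otherwise construct two distinct bad partners for A₁.
    have hT₂U : T₂ < A₁ ⊔ T₂ := by
      refine lt_of_le_of_ne le_sup_right ?_
      intro hcon2
      have hle : A₁ ≤ T₂ := by rw [hcon2]; exact le_sup_left
      have := Submodule.finrank_mono hle
      omega
    have hsum2 := Submodule.finrank_sup_add_finrank_inf_eq A₁ T₂
    obtain ⟨A₂, A₂', hne, ⟨hT₂A₂, hA₂k, hA₂inf⟩, ⟨hT₂A₂', hA₂'k, hA₂'inf⟩⟩ :=
      aux_two_extend hT₂U k hlt2 (by rw [hn]; omega)
    have hA₂F : A₂ ∈ F := by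
      refine hmem A₂ hA₂k fun B hB => le_trans (hc2 B hB) (Submodule.finrank_mono ?_)
      exact inf_le_inf_right B hT₂A₂
    have hA₂'F : A₂' ∈ F := by
      refine hmem A₂' hA₂'k fun B hB => le_trans (hc2 B hB) (Submodule.finrank_mono ?_)
      exact inf_le_inf_right B hT₂A₂'
    have hbad : ∀ A : Submodule K V, A ⊓ (A₁ ⊔ T₂) = T₂ → finrank K ↥(A₁ ⊓ A) < t := by
      intro A hAinf
      refine lt_of_le_of_lt (Submodule.finrank_mono ?_) hA₁T₂
      refine le_inf inf_le_left ?_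
      calc A₁ ⊓ A ≤ A ⊓ (A₁ ⊔ T₂) := le_inf inf_le_right (inf_le_left.trans le_sup_left)
      _ = T₂ := hAinf
    have := hF A₁ hA₁F ⟨hA₂F, hbad A₂ hA₂inf⟩ ⟨hA₂'F, hbad A₂' hA₂'inf⟩
    exact hne this
end

section
/- Let t ≥ 2 and n ≥ t + 3, let V be an n-dimensional vector space over F_q with q ∈ {2, 3}, and let F be a maximum-sized almost t-intersecting family of (t+1)-subspaces of V that is not t-intersecting, where n ≥ 2(t+1) + t + δ_{2,q} + (1 - 2t - δ_{2,q}). If F \ {U₁, U₂} is not t-intersecting for some U₁, U₂ ∈ F with dim(U₁ ∩ U₂) ≤ t - 1, then F = {U₁, U₂, U₃, U₄, (U₃∩U₁)+(U₄∩U₂), (U₄∩U₁)+(U₃∩U₂)} for some (t+1)-subspaces U₁,U₂,U₃,U₄ with U₁∩U₂ = U₃∩U₄ of dimension t-1 and dim(U_i ∩ U_j) = t for all i ∈ {1,2}, j ∈ {3,4}; in particular |F| = 6. -/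
open Module

/-- A family of subspaces is `t`-intersecting if any two members meet in dimension
at least `t`. -/
def TIntersecting {K V : Type*} [Field K] [AddCommGroup V] [Module K V]
    (t : ℕ) (F : Set (Submodule K V)) : Prop :=
  ∀ A ∈ F, ∀ B ∈ F, t ≤ finrank K ↥(A ⊓ B)

/-- Two distinct `t`-dimensional subspaces of a `(t+1)`-dimensional subspace span it,
and meet in dimension `t - 1`. -/
private lemma aux_sup_eq {K V : Type*} [Field K] [AddCommGroup V] [Module K V]
    [FiniteDimensional K V] {t : ℕ} (ht1 : 1 ≤ t) {P Q U : Submodule K V}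
    (hP : finrank K ↥P = t) (hQ : finrank K ↥Q = t) (hne : P ≠ Q)
    (hPU : P ≤ U) (hQU : Q ≤ U) (hU : finrank K ↥U = t + 1) :
    P ⊔ Q = U ∧ finrank K ↥(P ⊓ Q) = t - 1 := by
  have hinf : finrank K ↥(P ⊓ Q) < t := by
    rcases lt_or_eq_of_le (Submodule.finrank_mono (inf_le_left : P ⊓ Q ≤ P)) with h | h
    · omega
    · have h1 : P ⊓ Q = P :=
        Submodule.eq_of_le_of_finrank_le inf_le_left (le_of_eq h.symm)
      have h2 : P ≤ Q := h1 ▸ inf_le_right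
      exact absurd (Submodule.eq_of_le_of_finrank_le h2 (by rw [hP, hQ])) hne
  have hsum := Submodule.finrank_sup_add_finrank_inf_eq P Q
  have hle : finrank K ↥(P ⊔ Q) ≤ t + 1 := by
    have := Submodule.finrank_mono (sup_le hPU hQU)
    omega
  have hsup : P ⊔ Q = U := Submodule.eq_of_le_of_finrank_le (sup_le hPU hQU) (by omega)
  refine ⟨hsup, ?_⟩
  rw [hsup] at hsum
  omega

/-- The traces of `U₁` and `U₂` on `U₃` span `U₃`, hence `U₁ ⊓ U₂` has dimension
`t - 1` and is contained in `U₃`. -/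
private lemma aux_trace {K V : Type*} [Field K] [AddCommGroup V] [Module K V]
    [FiniteDimensional K V] {t : ℕ} (ht1 : 1 ≤ t) {U₁ U₂ U₃ : Submodule K V}
    (hd3 : finrank K ↥U₃ = t + 1) (d13 : finrank K ↥(U₁ ⊓ U₃) = t)
    (d23 : finrank K ↥(U₂ ⊓ U₃) = t) (h12lt : finrank K ↥(U₁ ⊓ U₂) < t) :
    U₁ ⊓ U₃ ⊔ U₂ ⊓ U₃ = U₃ ∧ finrank K ↥(U₁ ⊓ U₂) = t - 1 ∧ U₁ ⊓ U₂ ≤ U₃ := by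
  have hne : U₁ ⊓ U₃ ≠ U₂ ⊓ U₃ := by
    intro h
    have hle : U₁ ⊓ U₃ ≤ U₁ ⊓ U₂ := le_inf inf_le_left (h ▸ inf_le_left)
    have := Submodule.finrank_mono hle
    omega
  have hs := aux_sup_eq ht1 d13 d23 hne inf_le_right inf_le_right hd3
  have hT : (U₁ ⊓ U₃) ⊓ (U₂ ⊓ U₃) = U₁ ⊓ U₂ := by
    apply Submodule.eq_of_le_of_finrank_le
      (le_inf (inf_le_left.trans inf_le_left) (inf_le_right.trans inf_le_left))
    omega
  exact ⟨hs.1, by rw [← hT]; exact hs.2, hT ▸ (inf_le_left.trans inf_le_right)⟩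

private lemma aux_W {K V : Type*} [Field K] [AddCommGroup V] [Module K V]
    [FiniteDimensional K V] {t : ℕ} (ht1 : 1 ≤ t) {P Q : Submodule K V}
    (dP : finrank K ↥P = t) (dQ : finrank K ↥Q = t)
    (hPQ : finrank K ↥(P ⊓ Q) = t - 1) : finrank K ↥(P ⊔ Q) = t + 1 := by
  have := Submodule.finrank_sup_add_finrank_inf_eq P Q
  omega

private lemma aux_dS {K V : Type*} [Field K] [AddCommGroup V] [Module K V]
    [FiniteDimensional K V] {t : ℕ} (ht1 : 1 ≤ t) {U₁ U₂ : Submodule K V}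
    (hd1 : finrank K ↥U₁ = t + 1) (hd2 : finrank K ↥U₂ = t + 1)
    (dT : finrank K ↥(U₁ ⊓ U₂) = t - 1) : finrank K ↥(U₁ ⊔ U₂) = t + 3 := by
  have := Submodule.finrank_sup_add_finrank_inf_eq U₁ U₂
  omega

private lemma aux_dinf {K V : Type*} [Field K] [AddCommGroup V] [Module K V]
    [FiniteDimensional K V] {t : ℕ} {A B : Submodule K V}
    (dA : finrank K ↥A = t + 1) (dB : finrank K ↥B = t + 1)
    (dsup : finrank K ↥(A ⊔ B) = t + 3) : finrank K ↥(A ⊓ B) = t - 1 := by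
  have := Submodule.finrank_sup_add_finrank_inf_eq A B
  omega

private lemma aux_sup4 {K V : Type*} [Field K] [AddCommGroup V] [Module K V]
    {U₁ U₂ U₃ U₄ : Submodule K V}
    (s1 : U₁ ⊓ U₃ ⊔ U₁ ⊓ U₄ = U₁) (s2 : U₂ ⊓ U₃ ⊔ U₂ ⊓ U₄ = U₂) :
    (U₁ ⊓ U₃ ⊔ U₂ ⊓ U₄) ⊔ (U₁ ⊓ U₄ ⊔ U₂ ⊓ U₃) = U₁ ⊔ U₂ := by
  apply le_antisymm
  · apply sup_le
    · exact sup_le (inf_le_left.trans le_sup_left) (inf_le_left.trans le_sup_right)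
    · exact sup_le (inf_le_left.trans le_sup_left) (inf_le_left.trans le_sup_right)
  · apply sup_le
    · conv_lhs => rw [← s1]
      exact sup_le (le_sup_left.trans le_sup_left) (le_sup_left.trans le_sup_right)
    · conv_lhs => rw [← s2]
      exact sup_le (le_sup_right.trans le_sup_right) (le_sup_right.trans le_sup_left)

private lemma aux_nhelp {K V : Type*} [Field K] [AddCommGroup V] [Module K V]
    [FiniteDimensional K V] {t : ℕ} {X Y : Submodule K V}
    (hX : t ≤ finrank K ↥X) (hY : finrank K ↥Y < t) (hle : X ≤ Y) : False := by
  have := Submodule.finrank_mono hle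
  omega

private lemma nat_lt_of_le_pred {t d : ℕ} (ht : 1 ≤ t) (h : d ≤ t - 1) : d < t := by omega

private lemma nat_ne_succ_pred {t : ℕ} (ht : 1 ≤ t) : t + 1 ≠ t - 1 := by omega

/-- The transversal lemma: a further member traces on `U₁` or `U₂` exactly as `U₃`
does. -/
private lemma aux_trans {K V : Type*} [Field K] [AddCommGroup V] [Module K V]
    [FiniteDimensional K V] {t : ℕ} (ht1 : 1 ≤ t) {A U₁ U₂ U₃ : Submodule K V}
    (hd1 : finrank K ↥U₁ = t + 1) (hd2 : finrank K ↥U₂ = t + 1)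
    (hd3 : finrank K ↥U₃ = t + 1) (hdA : finrank K ↥A = t + 1)
    (dQ1 : finrank K ↥(A ⊓ U₁) = t) (dQ2 : finrank K ↥(A ⊓ U₂) = t)
    (dQ3 : finrank K ↥(A ⊓ U₃) = t)
    (d13 : finrank K ↥(U₁ ⊓ U₃) = t) (d23 : finrank K ↥(U₂ ⊓ U₃) = t)
    (hA12 : A ⊓ U₁ ⊔ A ⊓ U₂ = A) (s3 : U₁ ⊓ U₃ ⊔ U₂ ⊓ U₃ = U₃)
    (dS : finrank K ↥(U₁ ⊔ U₂) = t + 3) :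
    A ⊓ U₁ = U₁ ⊓ U₃ ∨ A ⊓ U₂ = U₂ ⊓ U₃ := by
  by_contra hc
  push_neg at hc
  have e1' : A ⊓ U₁ ⊔ U₁ ⊓ U₃ = U₁ :=
    (aux_sup_eq ht1 dQ1 d13 hc.1 inf_le_right inf_le_left hd1).1
  have e2' : A ⊓ U₂ ⊔ U₂ ⊓ U₃ = U₂ :=
    (aux_sup_eq ht1 dQ2 d23 hc.2 inf_le_right inf_le_left hd2).1
  have hsupA : A ⊔ U₃ = U₁ ⊔ U₂ := by
    apply le_antisymm
    · apply sup_le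
      · conv_lhs => rw [← hA12]
        exact sup_le (inf_le_right.trans le_sup_left) (inf_le_right.trans le_sup_right)
      · conv_lhs => rw [← s3]
        exact sup_le (inf_le_left.trans le_sup_left) (inf_le_left.trans le_sup_right)
    · apply sup_le
      · conv_lhs => rw [← e1']
        exact sup_le (inf_le_left.trans le_sup_left) (inf_le_right.trans le_sup_right)
      · conv_lhs => rw [← e2']
        exact sup_le (inf_le_left.trans le_sup_left) (inf_le_right.trans le_sup_right)
  have := Submodule.finrank_sup_add_finrank_inf_eq A U₃
  rw [hsupA] at this
  omega

/-- Classification of a further member: it is one of the two transversals. -/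
private lemma aux_main {K V : Type*} [Field K] [AddCommGroup V] [Module K V]
    [FiniteDimensional K V] {t : ℕ} (ht1 : 1 ≤ t) {A U₁ U₂ U₃ U₄ : Submodule K V}
    (hd1 : finrank K ↥U₁ = t + 1) (hd2 : finrank K ↥U₂ = t + 1)
    (hd3 : finrank K ↥U₃ = t + 1) (hd4 : finrank K ↥U₄ = t + 1)
    (hdA : finrank K ↥A = t + 1)
    (h12lt : finrank K ↥(U₁ ⊓ U₂) < t) (h34lt : finrank K ↥(U₃ ⊓ U₄) < t)
    (dQ1 : finrank K ↥(A ⊓ U₁) = t) (dQ2 : finrank K ↥(A ⊓ U₂) = t)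
    (dQ3 : finrank K ↥(A ⊓ U₃) = t) (dQ4 : finrank K ↥(A ⊓ U₄) = t)
    (d13 : finrank K ↥(U₁ ⊓ U₃) = t) (d14 : finrank K ↥(U₁ ⊓ U₄) = t)
    (d23 : finrank K ↥(U₂ ⊓ U₃) = t) (d24 : finrank K ↥(U₂ ⊓ U₄) = t)
    (s3 : U₁ ⊓ U₃ ⊔ U₂ ⊓ U₃ = U₃) (s4 : U₁ ⊓ U₄ ⊔ U₂ ⊓ U₄ = U₄)
    (dS : finrank K ↥(U₁ ⊔ U₂) = t + 3) :
    A = U₁ ⊓ U₃ ⊔ U₂ ⊓ U₄ ∨ A = U₁ ⊓ U₄ ⊔ U₂ ⊓ U₃ := by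
  have hneQ : A ⊓ U₁ ≠ A ⊓ U₂ := by
    intro h
    exact aux_nhelp dQ1.ge h12lt (le_inf inf_le_right (h ▸ inf_le_right))
  have hA12 := (aux_sup_eq ht1 dQ1 dQ2 hneQ inf_le_left inf_le_left hdA).1
  have ne1314 : U₁ ⊓ U₃ ≠ U₁ ⊓ U₄ := by
    intro h
    exact aux_nhelp d13.ge h34lt (le_inf inf_le_right (h ▸ inf_le_right))
  have ne2324 : U₂ ⊓ U₃ ≠ U₂ ⊓ U₄ := by
    intro h
    exact aux_nhelp d23.ge h34lt (le_inf inf_le_right (h ▸ inf_le_right))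
  have C3 := aux_trans ht1 hd1 hd2 hd3 hdA dQ1 dQ2 dQ3 d13 d23 hA12 s3 dS
  have C4 := aux_trans ht1 hd1 hd2 hd4 hdA dQ1 dQ2 dQ4 d14 d24 hA12 s4 dS
  rcases C3 with h3' | h3' <;> rcases C4 with h4' | h4'
  · exact absurd (h3'.symm.trans h4') ne1314
  · left; rw [← hA12, h3', h4']
  · right; rw [← hA12, h4', h3']
  · exact absurd (h3'.symm.trans h4') ne2324

/-- The six-element configuration is almost `t`-intersecting. -/
private lemma aux_almost {K V : Type*} [Field K] [AddCommGroup V] [Module K V]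
    [FiniteDimensional K V] {t : ℕ} {U₁ U₂ U₃ U₄ W₁ W₂ : Submodule K V}
    (hd1 : finrank K ↥U₁ = t + 1) (hd2 : finrank K ↥U₂ = t + 1)
    (hd3 : finrank K ↥U₃ = t + 1) (hd4 : finrank K ↥U₄ = t + 1)
    (hd5 : finrank K ↥W₁ = t + 1) (hd6 : finrank K ↥W₂ = t + 1)
    (d13 : finrank K ↥(U₁ ⊓ U₃) = t) (d14 : finrank K ↥(U₁ ⊓ U₄) = t)
    (d23 : finrank K ↥(U₂ ⊓ U₃) = t) (d24 : finrank K ↥(U₂ ⊓ U₄) = t)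
    (g1 : t ≤ finrank K ↥(U₁ ⊓ W₁)) (g2 : t ≤ finrank K ↥(U₁ ⊓ W₂))
    (g3 : t ≤ finrank K ↥(U₂ ⊓ W₁)) (g4 : t ≤ finrank K ↥(U₂ ⊓ W₂))
    (g5 : t ≤ finrank K ↥(U₃ ⊓ W₁)) (g6 : t ≤ finrank K ↥(U₃ ⊓ W₂))
    (g7 : t ≤ finrank K ↥(U₄ ⊓ W₁)) (g8 : t ≤ finrank K ↥(U₄ ⊓ W₂)) :
    AlmostTIntersecting t ({U₁, U₂, U₃, U₄, W₁, W₂} : Set (Submodule K V)) := by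
  have dcomm : ∀ A B : Submodule K V, finrank K ↥(A ⊓ B) = finrank K ↥(B ⊓ A) :=
    fun A B => by rw [inf_comm]
  have d31 : finrank K ↥(U₃ ⊓ U₁) = t := by rw [dcomm]; exact d13
  have d32 : finrank K ↥(U₃ ⊓ U₂) = t := by rw [dcomm]; exact d23
  have d41 : finrank K ↥(U₄ ⊓ U₁) = t := by rw [dcomm]; exact d14
  have d42 : finrank K ↥(U₄ ⊓ U₂) = t := by rw [dcomm]; exact d24
  have gW11 : t ≤ finrank K ↥(W₁ ⊓ U₁) := by rw [dcomm]; exact g1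
  have gW12 : t ≤ finrank K ↥(W₁ ⊓ U₂) := by rw [dcomm]; exact g3
  have gW13 : t ≤ finrank K ↥(W₁ ⊓ U₃) := by rw [dcomm]; exact g5
  have gW14 : t ≤ finrank K ↥(W₁ ⊓ U₄) := by rw [dcomm]; exact g7
  have gW21 : t ≤ finrank K ↥(W₂ ⊓ U₁) := by rw [dcomm]; exact g2
  have gW22 : t ≤ finrank K ↥(W₂ ⊓ U₂) := by rw [dcomm]; exact g4
  have gW23 : t ≤ finrank K ↥(W₂ ⊓ U₃) := by rw [dcomm]; exact g6
  have gW24 : t ≤ finrank K ↥(W₂ ⊓ U₄) := by rw [dcomm]; exact g8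
  have memS6 : ∀ A : Submodule K V,
      A ∈ ({U₁, U₂, U₃, U₄, W₁, W₂} : Set (Submodule K V)) ↔
      (A = U₁ ∨ A = U₂ ∨ A = U₃ ∨ A = U₄ ∨ A = W₁ ∨ A = W₂) := by
    intro A
    simp only [Set.mem_insert_iff, Set.mem_singleton_iff]
  have key1 : ∀ B ∈ ({U₁, U₂, U₃, U₄, W₁, W₂} : Set (Submodule K V)),
      finrank K ↥(U₁ ⊓ B) < t → B = U₂ := by
    intro B hB h
    rcases (memS6 B).1 hB with rfl | rfl | rfl | rfl | rfl | rfl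
    · rw [inf_idem] at h; exact absurd h (not_lt.2 ((Nat.le_succ t).trans hd1.ge))
    · rfl
    · exact absurd h (not_lt.2 d13.ge)
    · exact absurd h (not_lt.2 d14.ge)
    · exact absurd h (not_lt.2 g1)
    · exact absurd h (not_lt.2 g2)
  have key2 : ∀ B ∈ ({U₁, U₂, U₃, U₄, W₁, W₂} : Set (Submodule K V)),
      finrank K ↥(U₂ ⊓ B) < t → B = U₁ := by
    intro B hB h
    rcases (memS6 B).1 hB with rfl | rfl | rfl | rfl | rfl | rfl
    · rfl
    · rw [inf_idem] at h; exact absurd h (not_lt.2 ((Nat.le_succ t).trans hd2.ge))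
    · exact absurd h (not_lt.2 d23.ge)
    · exact absurd h (not_lt.2 d24.ge)
    · exact absurd h (not_lt.2 g3)
    · exact absurd h (not_lt.2 g4)
  have key3 : ∀ B ∈ ({U₁, U₂, U₃, U₄, W₁, W₂} : Set (Submodule K V)),
      finrank K ↥(U₃ ⊓ B) < t → B = U₄ := by
    intro B hB h
    rcases (memS6 B).1 hB with rfl | rfl | rfl | rfl | rfl | rfl
    · exact absurd h (not_lt.2 d31.ge)
    · exact absurd h (not_lt.2 d32.ge)
    · rw [inf_idem] at h; exact absurd h (not_lt.2 ((Nat.le_succ t).trans hd3.ge))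
    · rfl
    · exact absurd h (not_lt.2 g5)
    · exact absurd h (not_lt.2 g6)
  have key4 : ∀ B ∈ ({U₁, U₂, U₃, U₄, W₁, W₂} : Set (Submodule K V)),
      finrank K ↥(U₄ ⊓ B) < t → B = U₃ := by
    intro B hB h
    rcases (memS6 B).1 hB with rfl | rfl | rfl | rfl | rfl | rfl
    · exact absurd h (not_lt.2 d41.ge)
    · exact absurd h (not_lt.2 d42.ge)
    · rfl
    · rw [inf_idem] at h; exact absurd h (not_lt.2 ((Nat.le_succ t).trans hd4.ge))
    · exact absurd h (not_lt.2 g7)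
    · exact absurd h (not_lt.2 g8)
  have key5 : ∀ B ∈ ({U₁, U₂, U₃, U₄, W₁, W₂} : Set (Submodule K V)),
      finrank K ↥(W₁ ⊓ B) < t → B = W₂ := by
    intro B hB h
    rcases (memS6 B).1 hB with rfl | rfl | rfl | rfl | rfl | rfl
    · exact absurd h (not_lt.2 gW11)
    · exact absurd h (not_lt.2 gW12)
    · exact absurd h (not_lt.2 gW13)
    · exact absurd h (not_lt.2 gW14)
    · rw [inf_idem] at h; exact absurd h (not_lt.2 ((Nat.le_succ t).trans hd5.ge))
    · rfl
  have key6 : ∀ B ∈ ({U₁, U₂, U₃, U₄, W₁, W₂} : Set (Submodule K V)),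
      finrank K ↥(W₂ ⊓ B) < t → B = W₁ := by
    intro B hB h
    rcases (memS6 B).1 hB with rfl | rfl | rfl | rfl | rfl | rfl
    · exact absurd h (not_lt.2 gW21)
    · exact absurd h (not_lt.2 gW22)
    · exact absurd h (not_lt.2 gW23)
    · exact absurd h (not_lt.2 gW24)
    · rfl
    · rw [inf_idem] at h; exact absurd h (not_lt.2 ((Nat.le_succ t).trans hd6.ge))
  intro A hA B hB C hC
  obtain ⟨hBS, hBd⟩ := hB
  obtain ⟨hCS, hCd⟩ := hC
  rcases (memS6 A).1 hA with rfl | rfl | rfl | rfl | rfl | rfl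
  · exact (key1 B hBS hBd).trans (key1 C hCS hCd).symm
  · exact (key2 B hBS hBd).trans (key2 C hCS hCd).symm
  · exact (key3 B hBS hBd).trans (key3 C hCS hCd).symm
  · exact (key4 B hBS hBd).trans (key4 C hCS hCd).symm
  · exact (key5 B hBS hBd).trans (key5 C hCS hCd).symm
  · exact (key6 B hBS hBd).trans (key6 C hCS hCd).symm

private lemma aux_card {α : Type*} {a b c d e f : α}
    (h1 : a ≠ b) (h2 : a ≠ c) (h3 : a ≠ d) (h4 : a ≠ e) (h5 : a ≠ f)
    (h6 : b ≠ c) (h7 : b ≠ d) (h8 : b ≠ e) (h9 : b ≠ f)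
    (h10 : c ≠ d) (h11 : c ≠ e) (h12 : c ≠ f)
    (h13 : d ≠ e) (h14 : d ≠ f) (h15 : e ≠ f) :
    ({a, b, c, d, e, f} : Set α).ncard = 6 := by
  rw [Set.ncard_insert_of_notMem (by simp [h1, h2, h3, h4, h5]) (Set.toFinite _)]
  rw [Set.ncard_insert_of_notMem (by simp [h6, h7, h8, h9]) (Set.toFinite _)]
  rw [Set.ncard_insert_of_notMem (by simp [h10, h11, h12]) (Set.toFinite _)]
  rw [Set.ncard_insert_of_notMem (by simp [h13, h14]) (Set.toFinite _)]
  rw [Set.ncard_insert_of_notMem (by simp [h15]) (Set.toFinite _)]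
  rw [Set.ncard_singleton]

set_option maxHeartbeats 1000000 in
theorem stmt_17 {K V : Type*} [Field K] [Fintype K] [AddCommGroup V] [Module K V]
    [FiniteDimensional K V] (q n t : ℕ) (hq : Fintype.card K = q)
    (hq23 : q = 2 ∨ q = 3) (hn : finrank K V = n) (ht : 2 ≤ t) (hnt : t + 3 ≤ n)
    (F : Set (Submodule K V)) (hdim : ∀ A ∈ F, finrank K ↥A = t + 1)
    (hF : AlmostTIntersecting t F) (hnotint : ¬ TIntersecting t F)
    (hmax : ∀ G : Set (Submodule K V), (∀ A ∈ G, finrank K ↥A = t + 1) →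
      AlmostTIntersecting t G → ¬ TIntersecting t G → G.ncard ≤ F.ncard)
    (hsplit : ∃ U₁ ∈ F, ∃ U₂ ∈ F, finrank K ↥(U₁ ⊓ U₂) ≤ t - 1 ∧
      ¬ TIntersecting t (F \ {U₁, U₂})) :
    (∃ U₁ U₂ U₃ U₄ : Submodule K V,
        finrank K ↥U₁ = t + 1 ∧ finrank K ↥U₂ = t + 1 ∧
        finrank K ↥U₃ = t + 1 ∧ finrank K ↥U₄ = t + 1 ∧
        U₁ ⊓ U₂ = U₃ ⊓ U₄ ∧ finrank K ↥(U₁ ⊓ U₂) = t - 1 ∧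
        finrank K ↥(U₁ ⊓ U₃) = t ∧ finrank K ↥(U₁ ⊓ U₄) = t ∧
        finrank K ↥(U₂ ⊓ U₃) = t ∧ finrank K ↥(U₂ ⊓ U₄) = t ∧
        F = {U₁, U₂, U₃, U₄, U₃ ⊓ U₁ ⊔ U₄ ⊓ U₂, U₄ ⊓ U₁ ⊔ U₃ ⊓ U₂}) ∧
      F.ncard = 6 := by
  classical
  obtain ⟨U₁, hU₁F, U₂, hU₂F, h12le, hnot'⟩ := hsplit
  have ht1 : 1 ≤ t := le_trans one_le_two ht
  have h12lt : finrank K ↥(U₁ ⊓ U₂) < t := nat_lt_of_le_pred ht1 h12le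
  unfold TIntersecting at hnot'
  push_neg at hnot'
  obtain ⟨U₃, hU₃', U₄, hU₄', h34lt⟩ := hnot'
  have hU₃F : U₃ ∈ F := hU₃'.1
  have hU₄F : U₄ ∈ F := hU₄'.1
  have h3n := hU₃'.2
  have h4n := hU₄'.2
  simp only [Set.mem_insert_iff, Set.mem_singleton_iff, not_or] at h3n h4n
  obtain ⟨n31, n32⟩ := h3n
  obtain ⟨n41, n42⟩ := h4n
  have hd1 := hdim U₁ hU₁F
  have hd2 := hdim U₂ hU₂F
  have hd3 := hdim U₃ hU₃F
  have hd4 := hdim U₄ hU₄F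
  have dcomm : ∀ A B : Submodule K V, finrank K ↥(A ⊓ B) = finrank K ↥(B ⊓ A) :=
    fun A B => by rw [inf_comm]
  have h21lt : finrank K ↥(U₂ ⊓ U₁) < t := by rw [dcomm]; exact h12lt
  have h43lt : finrank K ↥(U₄ ⊓ U₃) < t := by rw [dcomm]; exact h34lt
  have n34 : U₃ ≠ U₄ := by
    intro h; rw [h, inf_idem] at h34lt
    exact absurd h34lt (not_lt.2 ((Nat.le_succ t).trans (hdim U₄ hU₄F).ge))
  have n12 : U₁ ≠ U₂ := by
    intro h; rw [h, inf_idem] at h12lt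
    exact absurd h12lt (not_lt.2 ((Nat.le_succ t).trans (hdim U₂ hU₂F).ge))
  have goodlem : ∀ X ∈ F, ∀ Y ∈ F, finrank K ↥(X ⊓ Y) < t →
      ∀ A ∈ F, A ≠ Y → t ≤ finrank K ↥(X ⊓ A) := by
    intro X hX Y hY hXY A hA hAY
    by_contra h
    exact hAY (hF X hX ⟨hA, not_le.1 h⟩ ⟨hY, hXY⟩)
  have exact_t : ∀ A ∈ F, ∀ B ∈ F, A ≠ B → t ≤ finrank K ↥(A ⊓ B) →
      finrank K ↥(A ⊓ B) = t := by
    intro A hA B hB hne hge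
    by_contra h
    have h2 : t < finrank K ↥(A ⊓ B) := lt_of_le_of_ne hge (Ne.symm h)
    have hAB : A ⊓ B = A :=
      Submodule.eq_of_le_of_finrank_le inf_le_left (by rw [hdim A hA]; exact h2)
    exact hne (Submodule.eq_of_le_of_finrank_le (hAB ▸ inf_le_right)
      (by rw [hdim A hA, hdim B hB]))
  have d13 : finrank K ↥(U₁ ⊓ U₃) = t :=
    exact_t U₁ hU₁F U₃ hU₃F (Ne.symm n31) (goodlem U₁ hU₁F U₂ hU₂F h12lt U₃ hU₃F n32)
  have d14 : finrank K ↥(U₁ ⊓ U₄) = t :=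
    exact_t U₁ hU₁F U₄ hU₄F (Ne.symm n41) (goodlem U₁ hU₁F U₂ hU₂F h12lt U₄ hU₄F n42)
  have d23 : finrank K ↥(U₂ ⊓ U₃) = t :=
    exact_t U₂ hU₂F U₃ hU₃F (Ne.symm n32) (goodlem U₂ hU₂F U₁ hU₁F h21lt U₃ hU₃F n31)
  have d24 : finrank K ↥(U₂ ⊓ U₄) = t :=
    exact_t U₂ hU₂F U₄ hU₄F (Ne.symm n42) (goodlem U₂ hU₂F U₁ hU₁F h21lt U₄ hU₄F n41)
  have d31 : finrank K ↥(U₃ ⊓ U₁) = t := by rw [dcomm]; exact d13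
  have d41 : finrank K ↥(U₄ ⊓ U₁) = t := by rw [dcomm]; exact d14
  have d32 : finrank K ↥(U₃ ⊓ U₂) = t := by rw [dcomm]; exact d23
  have d42 : finrank K ↥(U₄ ⊓ U₂) = t := by rw [dcomm]; exact d24
  -- structure
  obtain ⟨s3, dT, hT3⟩ := aux_trace ht1 hd3 d13 d23 h12lt
  obtain ⟨s4, -, hT4⟩ := aux_trace ht1 hd4 d14 d24 h12lt
  obtain ⟨s1', dT34, -⟩ := aux_trace ht1 hd1 d31 d41 h34lt
  obtain ⟨s2', -, -⟩ := aux_trace ht1 hd2 d32 d42 h34lt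
  have s1 : U₁ ⊓ U₃ ⊔ U₁ ⊓ U₄ = U₁ := by
    rw [inf_comm U₁ U₃, inf_comm U₁ U₄]; exact s1'
  have s2 : U₂ ⊓ U₃ ⊔ U₂ ⊓ U₄ = U₂ := by
    rw [inf_comm U₂ U₃, inf_comm U₂ U₄]; exact s2'
  have hT34 : U₁ ⊓ U₂ = U₃ ⊓ U₄ :=
    Submodule.eq_of_le_of_finrank_le (le_inf hT3 hT4) (le_of_eq (dT34.trans dT.symm))
  have hm1 : (U₁ ⊓ U₃) ⊓ (U₂ ⊓ U₄) = U₁ ⊓ U₂ := by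
    apply le_antisymm
      (le_inf (inf_le_left.trans inf_le_left) (inf_le_right.trans inf_le_left))
    exact le_inf (le_inf inf_le_left hT3) (le_inf inf_le_right hT4)
  have hm2 : (U₁ ⊓ U₄) ⊓ (U₂ ⊓ U₃) = U₁ ⊓ U₂ := by
    apply le_antisymm
      (le_inf (inf_le_left.trans inf_le_left) (inf_le_right.trans inf_le_left))
    exact le_inf (le_inf inf_le_left hT4) (le_inf inf_le_right hT3)
  have dW1 : finrank K ↥(U₁ ⊓ U₃ ⊔ U₂ ⊓ U₄) = t + 1 :=
    aux_W ht1 d13 d24 (by rw [hm1]; exact dT)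
  have dW2 : finrank K ↥(U₁ ⊓ U₄ ⊔ U₂ ⊓ U₃) = t + 1 :=
    aux_W ht1 d14 d23 (by rw [hm2]; exact dT)
  have dS : finrank K ↥(U₁ ⊔ U₂) = t + 3 := aux_dS ht1 hd1 hd2 dT
  have hWsup : (U₁ ⊓ U₃ ⊔ U₂ ⊓ U₄) ⊔ (U₁ ⊓ U₄ ⊔ U₂ ⊓ U₃) = U₁ ⊔ U₂ := aux_sup4 s1 s2
  have dW12 : finrank K ↥((U₁ ⊓ U₃ ⊔ U₂ ⊓ U₄) ⊓ (U₁ ⊓ U₄ ⊔ U₂ ⊓ U₃)) = t - 1 :=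
    aux_dinf dW1 dW2 (by rw [hWsup]; exact dS)
  -- distinctness
  have nW1U1 : U₁ ⊓ U₃ ⊔ U₂ ⊓ U₄ ≠ U₁ := fun h =>
    aux_nhelp d24.ge h12lt (le_inf (h ▸ le_sup_right) inf_le_left)
  have nW1U2 : U₁ ⊓ U₃ ⊔ U₂ ⊓ U₄ ≠ U₂ := fun h =>
    aux_nhelp d13.ge h12lt (le_inf inf_le_left (h ▸ le_sup_left))
  have h34lt' : finrank K ↥(U₃ ⊓ U₄) < t := nat_lt_of_le_pred ht1 dT34.le
  have nW1U3 : U₁ ⊓ U₃ ⊔ U₂ ⊓ U₄ ≠ U₃ := fun h =>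
    aux_nhelp d24.ge h34lt' (le_inf (h ▸ le_sup_right) inf_le_right)
  have nW1U4 : U₁ ⊓ U₃ ⊔ U₂ ⊓ U₄ ≠ U₄ := fun h =>
    aux_nhelp d13.ge h34lt' (le_inf inf_le_right (h ▸ le_sup_left))
  have nW2U1 : U₁ ⊓ U₄ ⊔ U₂ ⊓ U₃ ≠ U₁ := fun h =>
    aux_nhelp d23.ge h12lt (le_inf (h ▸ le_sup_right) inf_le_left)
  have nW2U2 : U₁ ⊓ U₄ ⊔ U₂ ⊓ U₃ ≠ U₂ := fun h =>
    aux_nhelp d14.ge h12lt (le_inf inf_le_left (h ▸ le_sup_left))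
  have nW2U3 : U₁ ⊓ U₄ ⊔ U₂ ⊓ U₃ ≠ U₃ := fun h =>
    aux_nhelp d14.ge h34lt' (le_inf (h ▸ le_sup_left) inf_le_right)
  have nW2U4 : U₁ ⊓ U₄ ⊔ U₂ ⊓ U₃ ≠ U₄ := fun h =>
    aux_nhelp d23.ge h34lt' (le_inf inf_le_right (h ▸ le_sup_right))
  have nW1W2 : U₁ ⊓ U₃ ⊔ U₂ ⊓ U₄ ≠ U₁ ⊓ U₄ ⊔ U₂ ⊓ U₃ := by
    intro h
    rw [h, inf_idem] at dW12
    exact nat_ne_succ_pred ht1 (dW2.symm.trans dW12)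
  -- classification of members
  have main : ∀ A ∈ F, A = U₁ ∨ A = U₂ ∨ A = U₃ ∨ A = U₄ ∨
      A = U₁ ⊓ U₃ ⊔ U₂ ⊓ U₄ ∨ A = U₁ ⊓ U₄ ⊔ U₂ ⊓ U₃ := by
    intro A hA
    by_cases e1 : A = U₁
    · exact Or.inl e1
    by_cases e2 : A = U₂
    · exact Or.inr (Or.inl e2)
    by_cases e3 : A = U₃
    · exact Or.inr (Or.inr (Or.inl e3))
    by_cases e4 : A = U₄
    · exact Or.inr (Or.inr (Or.inr (Or.inl e4)))
    have hdA := hdim A hA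
    have dQ1 : finrank K ↥(A ⊓ U₁) = t := by
      have hge : t ≤ finrank K ↥(U₁ ⊓ A) := goodlem U₁ hU₁F U₂ hU₂F h12lt A hA e2
      exact exact_t A hA U₁ hU₁F e1 (by rw [dcomm]; exact hge)
    have dQ2 : finrank K ↥(A ⊓ U₂) = t := by
      have hge : t ≤ finrank K ↥(U₂ ⊓ A) := goodlem U₂ hU₂F U₁ hU₁F h21lt A hA e1
      exact exact_t A hA U₂ hU₂F e2 (by rw [dcomm]; exact hge)
    have dQ3 : finrank K ↥(A ⊓ U₃) = t := by
      have hge : t ≤ finrank K ↥(U₃ ⊓ A) := goodlem U₃ hU₃F U₄ hU₄F h34lt A hA e4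
      exact exact_t A hA U₃ hU₃F e3 (by rw [dcomm]; exact hge)
    have dQ4 : finrank K ↥(A ⊓ U₄) = t := by
      have hge : t ≤ finrank K ↥(U₄ ⊓ A) := goodlem U₄ hU₄F U₃ hU₃F h43lt A hA e3
      exact exact_t A hA U₄ hU₄F e4 (by rw [dcomm]; exact hge)
    have := aux_main ht1 hd1 hd2 hd3 hd4 hdA h12lt h34lt' dQ1 dQ2 dQ3 dQ4
      d13 d14 d23 d24 s3 s4 dS
    exact Or.inr (Or.inr (Or.inr (Or.inr this)))
  -- the six-element family is a valid competitor
  have dims6 : ∀ A ∈ ({U₁, U₂, U₃, U₄, U₁ ⊓ U₃ ⊔ U₂ ⊓ U₄, U₁ ⊓ U₄ ⊔ U₂ ⊓ U₃} :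
      Set (Submodule K V)), finrank K ↥A = t + 1 := by
    intro A hA
    simp only [Set.mem_insert_iff, Set.mem_singleton_iff] at hA
    rcases hA with rfl | rfl | rfl | rfl | rfl | rfl
    exacts [hd1, hd2, hd3, hd4, dW1, dW2]
  have g1 : t ≤ finrank K ↥(U₁ ⊓ (U₁ ⊓ U₃ ⊔ U₂ ⊓ U₄)) :=
    d13.ge.trans (Submodule.finrank_mono (le_inf inf_le_left le_sup_left))
  have g2 : t ≤ finrank K ↥(U₁ ⊓ (U₁ ⊓ U₄ ⊔ U₂ ⊓ U₃)) :=
    d14.ge.trans (Submodule.finrank_mono (le_inf inf_le_left le_sup_left))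
  have g3 : t ≤ finrank K ↥(U₂ ⊓ (U₁ ⊓ U₃ ⊔ U₂ ⊓ U₄)) :=
    d24.ge.trans (Submodule.finrank_mono (le_inf inf_le_left le_sup_right))
  have g4 : t ≤ finrank K ↥(U₂ ⊓ (U₁ ⊓ U₄ ⊔ U₂ ⊓ U₃)) :=
    d23.ge.trans (Submodule.finrank_mono (le_inf inf_le_left le_sup_right))
  have g5 : t ≤ finrank K ↥(U₃ ⊓ (U₁ ⊓ U₃ ⊔ U₂ ⊓ U₄)) :=
    d13.ge.trans (Submodule.finrank_mono (le_inf inf_le_right le_sup_left))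
  have g6 : t ≤ finrank K ↥(U₃ ⊓ (U₁ ⊓ U₄ ⊔ U₂ ⊓ U₃)) :=
    d23.ge.trans (Submodule.finrank_mono (le_inf inf_le_right le_sup_right))
  have g7 : t ≤ finrank K ↥(U₄ ⊓ (U₁ ⊓ U₃ ⊔ U₂ ⊓ U₄)) :=
    d24.ge.trans (Submodule.finrank_mono (le_inf inf_le_right le_sup_right))
  have g8 : t ≤ finrank K ↥(U₄ ⊓ (U₁ ⊓ U₄ ⊔ U₂ ⊓ U₃)) :=
    d14.ge.trans (Submodule.finrank_mono (le_inf inf_le_right le_sup_left))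
  have almost6 := aux_almost hd1 hd2 hd3 hd4 dW1 dW2 d13 d14 d23 d24
    g1 g2 g3 g4 g5 g6 g7 g8
  have notint6 : ¬ TIntersecting t ({U₁, U₂, U₃, U₄, U₁ ⊓ U₃ ⊔ U₂ ⊓ U₄,
      U₁ ⊓ U₄ ⊔ U₂ ⊓ U₃} : Set (Submodule K V)) := by
    intro h
    exact absurd (h U₁ (by simp) U₂ (by simp)) (not_le.2 h12lt)
  have hsubset : F ⊆ ({U₁, U₂, U₃, U₄, U₁ ⊓ U₃ ⊔ U₂ ⊓ U₄, U₁ ⊓ U₄ ⊔ U₂ ⊓ U₃} :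
      Set (Submodule K V)) := by
    intro A hA
    simp only [Set.mem_insert_iff, Set.mem_singleton_iff]
    exact main A hA
  have hle6 := hmax _ dims6 almost6 notint6
  have hFeq : F = ({U₁, U₂, U₃, U₄, U₁ ⊓ U₃ ⊔ U₂ ⊓ U₄, U₁ ⊓ U₄ ⊔ U₂ ⊓ U₃} :
      Set (Submodule K V)) :=
    Set.eq_of_subset_of_ncard_le hsubset hle6 (Set.toFinite _)
  have hcard : ({U₁, U₂, U₃, U₄, U₁ ⊓ U₃ ⊔ U₂ ⊓ U₄, U₁ ⊓ U₄ ⊔ U₂ ⊓ U₃} :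
      Set (Submodule K V)).ncard = 6 :=
    aux_card n12 (Ne.symm n31) (Ne.symm n41) (Ne.symm nW1U1) (Ne.symm nW2U1)
      (Ne.symm n32) (Ne.symm n42) (Ne.symm nW1U2) (Ne.symm nW2U2)
      n34 (Ne.symm nW1U3) (Ne.symm nW2U3)
      (Ne.symm nW1U4) (Ne.symm nW2U4) nW1W2
  constructor
  · refine ⟨U₁, U₂, U₃, U₄, hd1, hd2, hd3, hd4, hT34, dT, d13, d14, d23, d24, ?_⟩
    rw [hFeq, inf_comm U₃ U₁, inf_comm U₄ U₂, inf_comm U₄ U₁, inf_comm U₃ U₂]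
  · rw [hFeq, hcard]
end

section
/- Let V be a vector space over a field, let U₁, U₂, U₃, U₄ be subspaces, and suppose U₁ ∩ U₂ ⊆ U₃ ∩ U₄, U₃ = (U₃∩U₁) + (U₃∩U₂), U₄ = (U₄∩U₁) + (U₄∩U₂), dim(U₃∩U₄∩U₁) ≤ t, dim(U₃∩U₄∩U₂) ≤ t, dim(U₁∩U₂) = t-1, and dim(U₃ ∩ U₄) ≥ t. Then dim(U₃∩U₄∩U₁) = t or dim(U₃∩U₄∩U₂) = t. -/
open Module

theorem stmt_18 {K V : Type*} [Field K] [AddCommGroup V] [Module K V]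
    [FiniteDimensional K V] (t : ℕ) (ht : 0 < t) (U₁ U₂ U₃ U₄ : Submodule K V)
    (h12 : U₁ ⊓ U₂ ≤ U₃ ⊓ U₄)
    (h3 : U₃ = U₃ ⊓ U₁ ⊔ U₃ ⊓ U₂) (h4 : U₄ = U₄ ⊓ U₁ ⊔ U₄ ⊓ U₂)
    (h341 : finrank K ↥(U₃ ⊓ U₄ ⊓ U₁) ≤ t) (h342 : finrank K ↥(U₃ ⊓ U₄ ⊓ U₂) ≤ t)
    (h12dim : finrank K ↥(U₁ ⊓ U₂) = t - 1) (h34 : t ≤ finrank K ↥(U₃ ⊓ U₄)) :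
    finrank K ↥(U₃ ⊓ U₄ ⊓ U₁) = t ∨ finrank K ↥(U₃ ⊓ U₄ ⊓ U₂) = t := by
  set A := U₃ ⊓ U₄ ⊓ U₁ with hA
  set B := U₃ ⊓ U₄ ⊓ U₂ with hB
  have hsum : U₃ ⊓ U₄ = A ⊔ B := by
    apply le_antisymm
    · intro x hx
      obtain ⟨hx3, hx4⟩ := hx
      -- x ∈ U₃ = U₃⊓U₁ ⊔ U₃⊓U₂
      have hx3' : x ∈ U₃ ⊓ U₁ ⊔ U₃ ⊓ U₂ := h3 ▸ hx3
      have hx4' : x ∈ U₄ ⊓ U₁ ⊔ U₄ ⊓ U₂ := h4 ▸ hx4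
      obtain ⟨a, ha, b, hb, hab⟩ := Submodule.mem_sup.mp hx3'
      obtain ⟨c, hc, d, hd, hcd⟩ := Submodule.mem_sup.mp hx4'
      have he1 : a - c ∈ U₁ := U₁.sub_mem ha.2 hc.2
      have he2 : a - c = d - b := by
        have h : a + b = c + d := by rw [hab, hcd]
        rw [sub_eq_sub_iff_add_eq_add]
        rw [h]; abel
      have he2' : a - c ∈ U₂ := he2 ▸ U₂.sub_mem hd.2 hb.2
      have he34 : a - c ∈ U₃ ⊓ U₄ := h12 ⟨he1, he2'⟩
      have haA : a ∈ A := by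
        refine ⟨⟨ha.1, ?_⟩, ha.2⟩
        have : a = c + (a - c) := by abel
        rw [this]
        exact U₄.add_mem hc.1 he34.2
      have hbB : b ∈ B := by
        refine ⟨⟨hb.1, ?_⟩, hb.2⟩
        have : b = x - a := by rw [← hab]; abel
        rw [this]
        exact U₄.sub_mem hx4 haA.1.2
      rw [← hab]
      exact Submodule.add_mem_sup haA hbB
    · exact sup_le (le_trans inf_le_left le_rfl) (le_trans inf_le_left le_rfl)
  have hAB : A ⊓ B = U₁ ⊓ U₂ := by
    apply le_antisymm
    · intro x hx
      exact ⟨hx.1.2, hx.2.2⟩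
    · intro x hx
      exact ⟨⟨h12 hx, hx.1⟩, ⟨h12 hx, hx.2⟩⟩
  have hdim := Submodule.finrank_sup_add_finrank_inf_eq A B
  rw [hAB, ← hsum, h12dim] at hdim
  by_contra h
  push_neg at h
  have h1 : finrank K A ≤ t - 1 := by omega
  have h2 : finrank K B ≤ t - 1 := by omega
  omega
end
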